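/- arXiv:2501.12376 — 6 statements merged into one kernel-verified Lean document; each statement's English description precedes it below -/
import Mathlib

section
/- Let H = ⊕_{j=1}^k V_j ⊗ W_j be a direct-sum decomposition of a Hilbert space, and let (p_i, ρ_i)_{i=1}^N be an ensemble where each ρ_i = ⊕_j q_{ij} ρ_{ij} ⊗ ω_j with ρ_{ij}, ω_j quantum states and q_{ij} ≥ 0 summing (over j) to 1. Set s_j = Σ_i p_i q_{ij} and p_{ij} = p_i q_{ij}/s_j. Then the optimal success probability of discriminating (p_i, ρ_i)_i equals Σ_j s_j · p*_succ(j), where p*_succ(j) is the optimal success probability of discriminating (p_{ij}, ρ_{ij})_i on V_j. -/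
open scoped ComplexOrder Kronecker

open Matrix
set_option linter.unusedSectionVars false
set_option linter.dupNamespace false
set_option maxHeartbeats 1000000

namespace OptSuccAux



variable {n m : Type*} [Fintype n] [Fintype m]

lemma trace_re_nonneg_of_psd [DecidableEq n] {A : Matrix n n ℂ} (hA : A.PosSemidef) : 0 ≤ A.trace.re := by
  have h : ∀ i, 0 ≤ (A i i).re := by
    intro i
    have := hA.re_dotProduct_nonneg (Pi.single i 1)
    simpa [dotProduct, Matrix.mulVec, Pi.single_apply, Finset.sum_ite_eq] using this
  rw [Matrix.trace]
  rw [Complex.re_sum]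
  exact Finset.sum_nonneg fun i _ => h i

open scoped MatrixOrder in
lemma psd_exists_ct {A : Matrix n n ℂ} (hA : A.PosSemidef) : ∃ C : Matrix n n ℂ, A = Cᴴ * C := by
  classical
  obtain ⟨C, hC⟩ := CStarAlgebra.nonneg_iff_eq_star_mul_self.mp hA.nonneg
  exact ⟨C, hC⟩

lemma trace_mul_re_nonneg {A B : Matrix n n ℂ} (hA : A.PosSemidef) (hB : B.PosSemidef) :
    0 ≤ ((A * B).trace).re := by
  classical
  obtain ⟨C, rfl⟩ := psd_exists_ct hA
  rw [Matrix.mul_assoc, Matrix.trace_mul_comm]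
  exact trace_re_nonneg_of_psd ((hB.mul_mul_conjTranspose_same C))

lemma trace_mul_re_le {M ρ : Matrix n n ℂ} [DecidableEq n] (hM1 : ((1 : Matrix n n ℂ) - M).PosSemidef)
    (hρ : ρ.PosSemidef) : ((M * ρ).trace).re ≤ ρ.trace.re := by
  have h := trace_mul_re_nonneg hM1 hρ
  rw [Matrix.sub_mul, Matrix.one_mul, Matrix.trace_sub, Complex.sub_re] at h
  linarith

lemma conjTranspose_kron {l m' p q : Type*} (A : Matrix l m' ℂ) (B : Matrix p q ℂ) :
    (A ⊗ₖ B)ᴴ = Aᴴ ⊗ₖ Bᴴ := by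
  ext ⟨i, j⟩ ⟨a, b⟩
  simp [Matrix.conjTranspose_apply, star_mul']

lemma psd_kron {A : Matrix n n ℂ} {B : Matrix m m ℂ} (hA : A.PosSemidef) (hB : B.PosSemidef) :
    (A ⊗ₖ B).PosSemidef := by
  obtain ⟨C, rfl⟩ := psd_exists_ct hA
  obtain ⟨D, rfl⟩ := psd_exists_ct hB
  rw [Matrix.mul_kronecker_mul, ← conjTranspose_kron]
  exact Matrix.posSemidef_conjTranspose_mul_self _

lemma psd_finset_sum {ι : Type*} (s : Finset ι) (M : ι → Matrix n n ℂ)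
    (h : ∀ i, (M i).PosSemidef) : (∑ i ∈ s, M i).PosSemidef :=
  Finset.sum_induction M _ (fun _ _ ha hb => ha.add hb) Matrix.PosSemidef.zero (fun i _ => h i)



variable {kk : Type*} [Fintype kk] [DecidableEq kk] {n' : kk → Type*}
  [∀ j, Fintype (n' j)] [∀ j, DecidableEq (n' j)]

lemma psd_blockDiagonal' {D : ∀ j, Matrix (n' j) (n' j) ℂ} (hD : ∀ j, (D j).PosSemidef) :
    (Matrix.blockDiagonal' D).PosSemidef := by
  refine Matrix.PosSemidef.of_dotProduct_mulVec_nonneg ?_ ?_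
  · rw [Matrix.IsHermitian, Matrix.blockDiagonal'_conjTranspose]
    exact congrArg _ (funext fun j => (hD j).isHermitian)
  · intro x
    have key : star x ⬝ᵥ (Matrix.blockDiagonal' D *ᵥ x)
        = ∑ j, star (fun a => x ⟨j, a⟩) ⬝ᵥ (D j *ᵥ fun a => x ⟨j, a⟩) := by
      simp only [dotProduct, Matrix.mulVec, Pi.star_apply, ← Finset.univ_sigma_univ,
        Finset.sum_sigma]
      refine Finset.sum_congr rfl fun j _ => Finset.sum_congr rfl fun a _ => ?_
      congr 1
      rw [Finset.sum_eq_single j]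
      · exact Finset.sum_congr rfl fun b _ => by
          rw [Matrix.blockDiagonal'_apply_eq]
      · intro j' _ hj'
        refine Finset.sum_eq_zero fun b _ => ?_
        rw [Matrix.blockDiagonal'_apply_ne _ _ _ (Ne.symm hj'), zero_mul]
      · intro h; exact absurd (Finset.mem_univ j) h
    rw [key]
    exact Finset.sum_nonneg fun j _ => (hD j).dotProduct_mulVec_nonneg _

lemma trace_mul_blockDiagonal' (A : Matrix (Σ j : kk, n' j) (Σ j : kk, n' j) ℂ)
    (D : ∀ j, Matrix (n' j) (n' j) ℂ) :
    (A * Matrix.blockDiagonal' D).trace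
      = ∑ j, (A.submatrix (Sigma.mk j) (Sigma.mk j) * D j).trace := by
  simp only [Matrix.trace, Matrix.diag, Matrix.mul_apply, ← Finset.univ_sigma_univ,
    Finset.sum_sigma, Matrix.submatrix_apply]
  refine Finset.sum_congr rfl fun j _ => Finset.sum_congr rfl fun a _ => ?_
  rw [Finset.sum_eq_single j]
  · exact Finset.sum_congr rfl fun b _ => by rw [Matrix.blockDiagonal'_apply_eq]
  · intro j' _ hj'
    refine Finset.sum_eq_zero fun b _ => ?_
    rw [Matrix.blockDiagonal'_apply_ne _ _ _ hj', mul_zero]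
  · intro h; exact absurd (Finset.mem_univ j) h

lemma sum_blockDiagonal' {ι : Type*} (s : Finset ι) (D : ι → ∀ j, Matrix (n' j) (n' j) ℂ) :
    ∑ i ∈ s, Matrix.blockDiagonal' (D i) = Matrix.blockDiagonal' (fun j => ∑ i ∈ s, D i j) := by
  ext σ τ
  simp only [Matrix.sum_apply, Matrix.blockDiagonal'_apply]
  rcases σ with ⟨j, a⟩; rcases τ with ⟨j', b⟩
  by_cases h : j = j'
  · subst h; simp [Matrix.sum_apply]
  · simp [h]






variable {n m : Type*} [Fintype n] [Fintype m] [DecidableEq n] [DecidableEq m]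

open scoped MatrixOrder in
/-- Square root of a positive semidefinite matrix. -/
noncomputable def _root_.Matrix.PosSemidef.sqrt {A : Matrix n n ℂ} (_hA : A.PosSemidef) :
    Matrix n n ℂ :=
  CFC.sqrt A

open scoped MatrixOrder in
lemma _root_.Matrix.PosSemidef.posSemidef_sqrt {A : Matrix n n ℂ} (hA : A.PosSemidef) :
    hA.sqrt.PosSemidef :=
  (CFC.sqrt_nonneg A).posSemidef

open scoped MatrixOrder in
lemma _root_.Matrix.PosSemidef.sqrt_mul_self {A : Matrix n n ℂ} (hA : A.PosSemidef) :
    hA.sqrt * hA.sqrt = A :=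
  CFC.sqrt_mul_sqrt_self A hA.nonneg

/-- Partial trace over the second factor. -/
noncomputable def ptr (A : Matrix (n × m) (n × m) ℂ) : Matrix n n ℂ :=
  Matrix.of fun a b => ∑ c, A (a, c) (b, c)

/-- The isometry-like matrix embedding `n` into `n × m` at column `c`. -/
noncomputable def emb (c : m) : Matrix n (n × m) ℂ :=
  Matrix.of fun a be => if be = (a, c) then 1 else 0

lemma ptr_eq_sum (A : Matrix (n × m) (n × m) ℂ) :
    ptr A = ∑ c, ((emb c : Matrix n (n × m) ℂ) * A : Matrix n (n × m) ℂ) * Matrix.conjTranspose (emb c : Matrix n (n × m) ℂ) := by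
  ext a b
  simp [Matrix.sum_apply, Matrix.mul_apply, Matrix.conjTranspose_apply, emb, ptr,
    apply_ite star, ite_mul, mul_ite, Finset.sum_ite_eq, Finset.sum_ite_eq']

lemma ptr_psd {A : Matrix (n × m) (n × m) ℂ} (hA : A.PosSemidef) : (ptr A).PosSemidef := by
  rw [ptr_eq_sum]
  exact Finset.sum_induction _ _ (fun _ _ ha hb => ha.add hb) Matrix.PosSemidef.zero
    (fun c _ => hA.mul_mul_conjTranspose_same (emb c))

lemma ptr_sum {ι : Type*} (s : Finset ι) (A : ι → Matrix (n × m) (n × m) ℂ) :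
    ptr (∑ i ∈ s, A i) = ∑ i ∈ s, ptr (A i) := by
  ext a b
  simp only [ptr, Matrix.of_apply, Matrix.sum_apply]
  rw [Finset.sum_comm]

lemma ptr_trace (A : Matrix (n × m) (n × m) ℂ) (ρ : Matrix n n ℂ) :
    ((ptr A) * ρ).trace = (A * (ρ ⊗ₖ (1 : Matrix m m ℂ))).trace := by
  simp only [Matrix.trace, Matrix.diag, Matrix.mul_apply, ptr, Matrix.of_apply,
    Fintype.sum_prod_type, Matrix.kroneckerMap_apply, Matrix.one_apply, mul_ite, mul_one,
    mul_zero, Finset.sum_ite_eq', Finset.mem_univ, if_true, Finset.sum_mul]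
  exact Finset.sum_congr rfl fun a _ => Finset.sum_comm

lemma ptr_kron (X : Matrix n n ℂ) (Y : Matrix m m ℂ) : ptr (X ⊗ₖ Y) = Y.trace • X := by
  ext a b
  simp only [ptr, Matrix.of_apply, Matrix.kroneckerMap_apply, Matrix.smul_apply,
    Matrix.trace, Matrix.diag, smul_eq_mul, Finset.sum_mul]
  exact Finset.sum_congr rfl fun c _ => mul_comm _ _






lemma weighted_csSup_le {k : ℕ} {c : Fin k → ℝ} (hc : ∀ j, 0 ≤ c j)
    {S : Fin k → Set ℝ} (hne : ∀ j, (S j).Nonempty) {t : ℝ}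
    (h : ∀ x : Fin k → ℝ, (∀ j, x j ∈ S j) → ∑ j, c j * x j ≤ t) :
    ∑ j, c j * sSup (S j) ≤ t := by
  refine le_of_forall_pos_le_add fun ε hε => ?_
  have hcs : (0:ℝ) ≤ ∑ j, c j := Finset.sum_nonneg fun j _ => hc j
  set δ := ε / (1 + ∑ j, c j) with hδ
  have hδpos : 0 < δ := div_pos hε (by linarith)
  have hex : ∀ j, ∃ y ∈ S j, sSup (S j) - δ < y := fun j =>
    exists_lt_of_lt_csSup (hne j) (by linarith)
  choose y hy hylt using hex
  have h1 : ∑ j, c j * sSup (S j) ≤ ∑ j, c j * (y j + δ) :=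
    Finset.sum_le_sum fun j _ => mul_le_mul_of_nonneg_left (by linarith [hylt j]) (hc j)
  have h2 : ∑ j, c j * (y j + δ) = (∑ j, c j * y j) + (∑ j, c j) * δ := by
    simp only [mul_add, Finset.sum_add_distrib, Finset.sum_mul]
  have h3 : (∑ j, c j) * δ ≤ ε := by
    have : δ * (1 + ∑ j, c j) = ε := by
      rw [hδ]; field_simp
    nlinarith
  have h4 := h y hy
  linarith

variable {ι H : Type*} [Fintype ι] [Fintype H] [DecidableEq H]

/-- The POVM-value set in the definition of `optSucc`. -/
def povmSet (p : ι → ℝ) (ρ : ι → Matrix H H ℂ) : Set ℝ :=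
  {x : ℝ | ∃ M : ι → Matrix H H ℂ,
    (∀ i, (M i).PosSemidef) ∧ (∑ i, M i) = 1 ∧ x = ∑ i, p i * ((M i * ρ i).trace).re}

lemma povmSet_nonempty [Nonempty ι] [DecidableEq ι] (p : ι → ℝ) (ρ : ι → Matrix H H ℂ) :
    (povmSet p ρ).Nonempty := by
  classical
  refine ⟨_, fun i => if i = Classical.arbitrary ι then 1 else 0, fun i => ?_, ?_, rfl⟩
  · dsimp only
    split
    · exact Matrix.PosSemidef.one
    · exact Matrix.PosSemidef.zero
  · simp

lemma one_sub_psd {M : ι → Matrix H H ℂ} (hpsd : ∀ i, (M i).PosSemidef)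
    (hsum : (∑ i, M i) = 1) (i₀ : ι) : ((1 : Matrix H H ℂ) - M i₀).PosSemidef := by
  classical
  have h : (1 : Matrix H H ℂ) - M i₀ = ∑ i ∈ Finset.univ.erase i₀, M i := by
    rw [← hsum, eq_comm, eq_sub_iff_add_eq]
    exact Finset.sum_erase_add _ _ (Finset.mem_univ i₀)
  rw [h]
  exact Finset.sum_induction _ _ (fun _ _ ha hb => ha.add hb) Matrix.PosSemidef.zero
    (fun i _ => hpsd i)

lemma povmSet_le (p : ι → ℝ) (hp : ∀ i, 0 ≤ p i) {ρ : ι → Matrix H H ℂ}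
    (hρ : ∀ i, (ρ i).PosSemidef ∧ (ρ i).trace = 1) :
    ∀ x ∈ povmSet p ρ, x ≤ ∑ i, p i := by
  rintro x ⟨M, hpsd, hsum, rfl⟩
  refine Finset.sum_le_sum fun i _ => ?_
  have h1 : ((M i * ρ i).trace).re ≤ 1 := by
    have := trace_mul_re_le (one_sub_psd hpsd hsum i) (hρ i).1
    rwa [(hρ i).2, Complex.one_re] at this
  calc p i * ((M i * ρ i).trace).re ≤ p i * 1 := mul_le_mul_of_nonneg_left h1 (hp i)
    _ = p i := mul_one _

lemma povmSet_bddAbove (p : ι → ℝ) (hp : ∀ i, 0 ≤ p i) {ρ : ι → Matrix H H ℂ}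
    (hρ : ∀ i, (ρ i).PosSemidef ∧ (ρ i).trace = 1) : BddAbove (povmSet p ρ) :=
  ⟨∑ i, p i, fun x hx => povmSet_le p hp hρ x hx⟩



/-- smul of PSD by nonneg real is PSD -/
lemma psd_smul {n : Type*} [Fintype n] {X : Matrix n n ℂ} (hX : X.PosSemidef) {c : ℝ}
    (hc : 0 ≤ c) : ((c : ℂ) • X).PosSemidef := by
  refine Matrix.PosSemidef.of_dotProduct_mulVec_nonneg ?_ ?_
  · rw [Matrix.IsHermitian, Matrix.conjTranspose_smul]
    rw [hX.isHermitian]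
    congr 1
    simp [Complex.star_def, Complex.conj_ofReal]
  · intro x
    rw [Matrix.smul_mulVec, dotProduct_smul, smul_eq_mul]
    exact mul_nonneg (by exact_mod_cast Complex.zero_le_real.mpr hc) (hX.dotProduct_mulVec_nonneg x)

/-- sum of kronecker products with fixed right factor -/
lemma sum_kronecker_left {ι n m n2 m2 : Type*} [Fintype ι] (A : ι → Matrix n m ℂ)
    (B : Matrix n2 m2 ℂ) : ∑ i, (A i) ⊗ₖ B = (∑ i, A i) ⊗ₖ B := by
  ext ⟨a, c⟩ ⟨b, d⟩
  simp [Matrix.sum_apply, Finset.sum_mul]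

end OptSuccAux

/-- Optimal success probability of discriminating the ensemble `(p i, ρ i)` by a POVM. -/
noncomputable def optSucc {ι H : Type*} [Fintype ι] [Fintype H] [DecidableEq H]
    (p : ι → ℝ) (ρ : ι → Matrix H H ℂ) : ℝ :=
  sSup {x : ℝ | ∃ M : ι → Matrix H H ℂ,
    (∀ i, (M i).PosSemidef) ∧ (∑ i, M i) = 1 ∧ x = ∑ i, p i * ((M i * ρ i).trace).re}


lemma optSucc_eq {ι H : Type*} [Fintype ι] [Fintype H] [DecidableEq H]
    (p : ι → ℝ) (ρ : ι → Matrix H H ℂ) : optSucc p ρ = sSup (OptSuccAux.povmSet p ρ) := rfl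

/-- Discrimination of an ensemble whose states decompose as
`ρ i = ⊕_j q i j • (ρᵢⱼ ⊗ ωⱼ)` on `⊕_j V_j ⊗ W_j` reduces to discriminating the
conditional ensembles in each block: `p*_succ = ∑ j s j * p*_succ(j)`. -/
theorem optSucc_blockDiagonal_tensor
    (N k : ℕ) (v w : Fin k → ℕ)
    (p : Fin N → ℝ) (hp : ∀ i, 0 ≤ p i) (hpsum : ∑ i, p i = 1)
    (q : Fin N → Fin k → ℝ) (hq : ∀ i j, 0 ≤ q i j) (hqsum : ∀ i, ∑ j, q i j = 1)
    (ρij : Fin N → (j : Fin k) → Matrix (Fin (v j)) (Fin (v j)) ℂ)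
    (hρij : ∀ i j, (ρij i j).PosSemidef ∧ (ρij i j).trace = 1)
    (ω : (j : Fin k) → Matrix (Fin (w j)) (Fin (w j)) ℂ)
    (hω : ∀ j, (ω j).PosSemidef ∧ (ω j).trace = 1)
    (ρ : Fin N → Matrix ((j : Fin k) × (Fin (v j) × Fin (w j)))
        ((j : Fin k) × (Fin (v j) × Fin (w j))) ℂ)
    (hρ : ∀ i, ρ i = Matrix.blockDiagonal' (fun j => (q i j : ℂ) • (ρij i j ⊗ₖ ω j)))
    (s : Fin k → ℝ) (hs : ∀ j, s j = ∑ i, p i * q i j) :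
    optSucc p ρ = ∑ j, s j * optSucc (fun i => p i * q i j / s j) (fun i => ρij i j) := by
  classical
  open OptSuccAux in
  have hN : Nonempty (Fin N) := by
    rcases Nat.eq_zero_or_pos N with h | h
    · subst h; simp at hpsum
    · exact ⟨⟨0, h⟩⟩
  have hsnn : ∀ j, 0 ≤ s j := fun j =>
    (hs j) ▸ Finset.sum_nonneg fun i _ => mul_nonneg (hp i) (hq i j)
  have hp' : ∀ (j : Fin k) (i : Fin N), 0 ≤ p i * q i j / s j := fun j i =>
    div_nonneg (mul_nonneg (hp i) (hq i j)) (hsnn j)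
  -- key scalar identity
  have hkey : ∀ (j : Fin k) (r : Fin N → ℝ),
      s j * ∑ i, (p i * q i j / s j) * r i = ∑ i, (p i * q i j) * r i := by
    intro j r
    rcases eq_or_lt_of_le (hsnn j) with h0 | h0
    · rw [← h0, zero_mul]
      symm
      refine Finset.sum_eq_zero fun i _ => ?_
      have hz : p i * q i j = 0 :=
        (Finset.sum_eq_zero_iff_of_nonneg
          (fun i _ => mul_nonneg (hp i) (hq i j))).mp ((hs j) ▸ h0.symm) i (Finset.mem_univ i)
      rw [hz, zero_mul]
    · rw [Finset.mul_sum]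
      refine Finset.sum_congr rfl fun i _ => ?_
      field_simp
  -- the states are genuine states
  have hρst : ∀ i, (ρ i).PosSemidef ∧ (ρ i).trace = 1 := by
    intro i
    constructor
    · rw [hρ i]
      exact OptSuccAux.psd_blockDiagonal' fun j =>
        OptSuccAux.psd_smul (OptSuccAux.psd_kron (hρij i j).1 (hω j).1) (hq i j)
    · rw [hρ i, Matrix.trace_blockDiagonal']
      have : ∀ j, ((q i j : ℂ) • (ρij i j ⊗ₖ ω j)).trace = (q i j : ℂ) := by
        intro j
        rw [Matrix.trace_smul, Matrix.trace_kronecker, (hρij i j).2, (hω j).2,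
          one_mul, smul_eq_mul, mul_one]
      rw [Finset.sum_congr rfl fun j _ => this j]
      rw [← Complex.ofReal_sum, hqsum i, Complex.ofReal_one]
  have hlb : ∑ j, s j * optSucc (fun i => p i * q i j / s j) (fun i => ρij i j)
      ≤ optSucc p ρ := by
    simp only [optSucc_eq]
    refine OptSuccAux.weighted_csSup_le hsnn
      (fun j => OptSuccAux.povmSet_nonempty _ _) ?_
    intro x hx
    simp only [OptSuccAux.povmSet, Set.mem_setOf_eq] at hx
    choose Nj hNpsd hNsum hNval using hx
    set M : Fin N → Matrix ((j : Fin k) × (Fin (v j) × Fin (w j)))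
        ((j : Fin k) × (Fin (v j) × Fin (w j))) ℂ := fun i =>
      Matrix.blockDiagonal' (fun j => Nj j i ⊗ₖ (1 : Matrix (Fin (w j)) (Fin (w j)) ℂ)) with hM
    have hMpsd : ∀ i, (M i).PosSemidef := fun i =>
      OptSuccAux.psd_blockDiagonal' fun j =>
        OptSuccAux.psd_kron (hNpsd j i) Matrix.PosSemidef.one
    have hMsum : ∑ i, M i = 1 := by
      rw [hM, OptSuccAux.sum_blockDiagonal']
      have h1 : ∀ j, (∑ i, Nj j i ⊗ₖ (1 : Matrix (Fin (w j)) (Fin (w j)) ℂ)) = 1 := by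
        intro j
        rw [OptSuccAux.sum_kronecker_left, hNsum j, Matrix.one_kronecker_one]
      rw [funext h1]
      exact Matrix.blockDiagonal'_one
    have htr : ∀ i, ((M i * ρ i).trace).re
        = ∑ j, q i j * ((Nj j i * ρij i j).trace).re := by
      intro i
      rw [hρ i, hM]
      dsimp only
      rw [← Matrix.blockDiagonal'_mul, Matrix.trace_blockDiagonal', Complex.re_sum]
      refine Finset.sum_congr rfl fun j _ => ?_
      rw [Matrix.mul_smul, Matrix.trace_smul, smul_eq_mul, Complex.re_ofReal_mul,
        ← Matrix.mul_kronecker_mul, Matrix.one_mul, Matrix.trace_kronecker, (hω j).2, mul_one]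
    refine le_csSup (OptSuccAux.povmSet_bddAbove p hp hρst) ?_
    refine ⟨M, hMpsd, hMsum, ?_⟩
    calc ∑ j, s j * x j
        = ∑ j, ∑ i, (p i * q i j) * ((Nj j i * ρij i j).trace).re := by
          refine Finset.sum_congr rfl fun j _ => ?_
          rw [hNval j, hkey]
      _ = ∑ i, ∑ j, (p i * q i j) * ((Nj j i * ρij i j).trace).re := Finset.sum_comm
      _ = ∑ i, p i * ((M i * ρ i).trace).re := by
          refine Finset.sum_congr rfl fun i _ => ?_
          rw [htr i, Finset.mul_sum]
          exact Finset.sum_congr rfl fun j _ => by ring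
  have hub : optSucc p ρ ≤ ∑ j, s j * optSucc (fun i => p i * q i j / s j)
      (fun i => ρij i j) := by
    rw [optSucc_eq]
    refine csSup_le (OptSuccAux.povmSet_nonempty _ _) ?_
    rintro x ⟨M, hMpsd, hMsum, rfl⟩
    set sq : ∀ j, Matrix (Fin (w j)) (Fin (w j)) ℂ := fun j => (hω j).1.sqrt with hsqdef
    have hsq : ∀ j, (sq j).PosSemidef := fun j => (hω j).1.posSemidef_sqrt
    set X : ∀ j, Matrix (Fin (v j) × Fin (w j)) (Fin (v j) × Fin (w j)) ℂ :=
      fun j => (1 : Matrix (Fin (v j)) (Fin (v j)) ℂ) ⊗ₖ sq j with hXdef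
    have hXh : ∀ j, (X j)ᴴ = X j := by
      intro j
      rw [hXdef]
      dsimp only
      rw [OptSuccAux.conjTranspose_kron, Matrix.conjTranspose_one, (hsq j).isHermitian.eq]
    set blk : ∀ (j : Fin k), Matrix ((j' : Fin k) × (Fin (v j') × Fin (w j')))
        ((j' : Fin k) × (Fin (v j') × Fin (w j'))) ℂ
        → Matrix (Fin (v j) × Fin (w j)) (Fin (v j) × Fin (w j)) ℂ :=
      fun j A => A.submatrix (fun x => ⟨j, x⟩) (fun x => ⟨j, x⟩) with hblk
    set Nm : ∀ j, Fin N → Matrix (Fin (v j)) (Fin (v j)) ℂ :=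
      fun j i => OptSuccAux.ptr (X j * blk j (M i) * X j) with hNm
    have hNpsd : ∀ j i, (Nm j i).PosSemidef := by
      intro j i
      apply OptSuccAux.ptr_psd
      have h := ((hMpsd i).submatrix (fun x : Fin (v j) × Fin (w j) => (⟨j, x⟩ : (j' : Fin k) × (Fin (v j') × Fin (w j'))))).mul_mul_conjTranspose_same (X j)
      rwa [hXh j] at h
    have hblksum : ∀ j, (∑ i, blk j (M i)) = 1 := by
      intro j
      have h1 : (∑ i, blk j (M i)) = blk j (∑ i, M i) := by
        ext a b
        simp [hblk, Matrix.sum_apply]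
      rw [h1, hMsum, hblk]
      exact Matrix.submatrix_one (Sigma.mk j) sigma_mk_injective
    have hNsum : ∀ j, ∑ i, Nm j i = 1 := by
      intro j
      rw [hNm]
      dsimp only
      rw [← OptSuccAux.ptr_sum]
      have h2 : (∑ i, X j * blk j (M i) * X j) = X j * (∑ i, blk j (M i)) * X j := by
        rw [Finset.mul_sum, Finset.sum_mul]
      rw [h2, hblksum j, Matrix.mul_one]
      have h3 : X j * X j = (1 : Matrix (Fin (v j)) (Fin (v j)) ℂ) ⊗ₖ ω j := by
        rw [hXdef]
        dsimp only
        rw [← Matrix.mul_kronecker_mul, Matrix.one_mul, (hω j).1.sqrt_mul_self]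
      rw [h3, OptSuccAux.ptr_kron, (hω j).2, one_smul]
    have hNtr : ∀ j i, (Nm j i * ρij i j).trace
        = (blk j (M i) * (ρij i j ⊗ₖ ω j)).trace := by
      intro j i
      rw [hNm]
      dsimp only
      rw [OptSuccAux.ptr_trace]
      rw [Matrix.mul_assoc (X j) (blk j (M i)) (X j), Matrix.mul_assoc,
        Matrix.trace_mul_comm, Matrix.mul_assoc (blk j (M i)) (X j) _, Matrix.mul_assoc]
      have h4 : (X j * (ρij i j ⊗ₖ (1 : Matrix (Fin (w j)) (Fin (w j)) ℂ))) * X j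
          = ρij i j ⊗ₖ ω j := by
        rw [hXdef]
        dsimp only
        simp only [← Matrix.mul_kronecker_mul, Matrix.one_mul, Matrix.mul_one]
        rw [(hω j).1.sqrt_mul_self]
      rw [h4]
    have htr : ∀ i, ((M i * ρ i).trace).re
        = ∑ j, q i j * ((Nm j i * ρij i j).trace).re := by
      intro i
      rw [hρ i, OptSuccAux.trace_mul_blockDiagonal', Complex.re_sum]
      refine Finset.sum_congr rfl fun j _ => ?_
      rw [Matrix.mul_smul, Matrix.trace_smul, smul_eq_mul, Complex.re_ofReal_mul, hNtr j i]
    calc ∑ i, p i * ((M i * ρ i).trace).re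
        = ∑ j, ∑ i, (p i * q i j) * ((Nm j i * ρij i j).trace).re := by
          rw [Finset.sum_comm]
          refine Finset.sum_congr rfl fun i _ => ?_
          rw [htr i, Finset.mul_sum]
          exact Finset.sum_congr rfl fun j _ => by ring
      _ ≤ ∑ j, s j * optSucc (fun i => p i * q i j / s j) (fun i => ρij i j) := by
          refine Finset.sum_le_sum fun j _ => ?_
          rw [← hkey j]
          refine mul_le_mul_of_nonneg_left ?_ (hsnn j)
          rw [optSucc_eq]
          refine le_csSup (OptSuccAux.povmSet_bddAbove _ (hp' j) (fun i => hρij i j)) ?_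
          exact ⟨Nm j, fun i => hNpsd j i, hNsum j, rfl⟩
  exact le_antisymm hub hlb
end

section
/- Let G be a finite group of order n acting irreducibly on a d-dimensional Hilbert space, and consider the GU ensemble (1/n, g ρ g†)_{g∈G} with generator state ρ. Then the optimal discrimination success probability equals (d/n)·λ_max(ρ), where λ_max(ρ) is the largest eigenvalue of ρ. -/
open scoped ComplexOrder

open Matrix in
private lemma diag_entry_nonneg {m : Type*} [Fintype m] [DecidableEq m]
    {A : Matrix m m ℂ} (hA : A.PosSemidef) (i : m) : 0 ≤ A i i := by
  have h := hA.dotProduct_mulVec_nonneg (Pi.single i 1)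
  simpa [dotProduct, Matrix.mulVec, Pi.single_apply] using h

open Matrix in
private lemma psd_trace_nonneg {m : Type*} [Fintype m] [DecidableEq m]
    {A : Matrix m m ℂ} (hA : A.PosSemidef) : 0 ≤ A.trace := by
  rw [Matrix.trace]
  exact Finset.sum_nonneg fun i _ => diag_entry_nonneg hA i

open Matrix MatrixOrder in
private lemma trace_mul_psd_nonneg {m : Type*} [Fintype m] [DecidableEq m]
    {A B : Matrix m m ℂ} (hA : A.PosSemidef) (hB : B.PosSemidef) :
    0 ≤ (A * B).trace := by
  have h2 : (CFC.sqrt A * B * CFC.sqrt A).PosSemidef := by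
    have := hB.mul_mul_conjTranspose_same (CFC.sqrt A)
    rwa [(CFC.sqrt_nonneg A).posSemidef.1] at this
  have heq : (CFC.sqrt A * B * CFC.sqrt A).trace = (A * B).trace := by
    rw [Matrix.trace_mul_cycle, CFC.sqrt_mul_sqrt_self A hA.nonneg]
  rw [← heq]
  exact psd_trace_nonneg h2

open Matrix in
private lemma psd_smul_real {m : Type*} [Fintype m] [DecidableEq m]
    {A : Matrix m m ℂ} (hA : A.PosSemidef) {r : ℝ} (hr : 0 ≤ r) :
    ((r : ℂ) • A).PosSemidef := by
  refine Matrix.posSemidef_iff_dotProduct_mulVec.mpr ⟨?_, ?_⟩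
  · show ((r:ℂ) • A)ᴴ = _
    rw [Matrix.conjTranspose_smul, hA.1]
    congr 1
    simp [Complex.star_def, Complex.conj_ofReal]
  · intro x
    have h := hA.dotProduct_mulVec_nonneg x
    rw [Matrix.smul_mulVec, dotProduct_smul, smul_eq_mul]
    exact mul_nonneg (by exact_mod_cast hr) h

open Matrix in
private lemma smul_one_sub_psd {m : Type*} [Fintype m] [DecidableEq m]
    {A : Matrix m m ℂ} (hA : A.PosSemidef) {L : ℝ}
    (hL : ∀ i, hA.1.eigenvalues i ≤ L) :
    ((L : ℂ) • 1 - A).PosSemidef := by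
  set U : Matrix m m ℂ := (hA.1.eigenvectorUnitary : Matrix m m ℂ) with hU
  have hUU : U * star U = 1 := Unitary.coe_mul_star_self _
  have h1 : (L:ℂ) • (1 : Matrix m m ℂ) = U * ((L:ℂ) • 1) * star U := by
    rw [Matrix.mul_smul, Matrix.mul_one, Matrix.smul_mul, hUU]
  have key : (L:ℂ) • 1 - A =
      U * Matrix.diagonal (fun i => ((L - hA.1.eigenvalues i : ℝ) : ℂ)) * star U := by
    conv_lhs => rw [h1, hA.1.spectral_theorem, Unitary.conjStarAlgAut_apply]
    rw [← Matrix.sub_mul, ← Matrix.mul_sub, Matrix.smul_one_eq_diagonal,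
      Matrix.diagonal_sub]
    congr 2
    ext i
    push_cast
    rfl
  rw [key, Matrix.star_eq_conjTranspose]
  exact (Matrix.posSemidef_diagonal_iff.mpr fun i => by
    exact_mod_cast sub_nonneg.mpr (hL i)).mul_mul_conjTranspose_same U

open Matrix in
private lemma outer_psd {m : Type*} [Fintype m] [DecidableEq m] (v : m → ℂ) :
    (Matrix.of fun i j => v i * star (v j)).PosSemidef := by
  refine Matrix.posSemidef_iff_dotProduct_mulVec.mpr ⟨?_, ?_⟩
  · ext i j
    simp [Matrix.conjTranspose_apply, mul_comm]
  · intro x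
    have key : star x ⬝ᵥ ((Matrix.of fun i j => v i * star (v j)) *ᵥ x)
        = (∑ i, star (x i) * v i) * (∑ j, star (v j) * x j) := by
      simp only [dotProduct, Matrix.mulVec, Matrix.of_apply, Pi.star_apply]
      rw [Finset.sum_mul_sum]
      refine Finset.sum_congr rfl fun i _ => ?_
      rw [Finset.mul_sum]
      exact Finset.sum_congr rfl fun j _ => by ring
    have hstar : (∑ i, star (x i) * v i) = star (∑ j, star (v j) * x j) := by
      rw [star_sum]
      exact Finset.sum_congr rfl fun j _ => by rw [StarMul.star_mul, star_star, mul_comm]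
    rw [key, hstar]
    exact star_mul_self_nonneg _

open Matrix in
private lemma trace_mul_outer {m : Type*} [Fintype m] [DecidableEq m]
    (A : Matrix m m ℂ) (v : m → ℂ) :
    (A * Matrix.of fun i j => v i * star (v j)).trace
      = ∑ j, (A *ᵥ v) j * star (v j) := by
  simp only [Matrix.trace, Matrix.diag, Matrix.mul_apply, Matrix.of_apply, Matrix.mulVec,
    dotProduct]
  refine Finset.sum_congr rfl fun j _ => ?_
  rw [Finset.sum_mul]
  exact Finset.sum_congr rfl fun i _ => by ring

open Matrix in
private lemma outer_trace {m : Type*} [Fintype m] [DecidableEq m]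
    {v : m → ℂ} (hv : ∑ j, star (v j) * v j = 1) :
    (Matrix.of fun i j => v i * star (v j)).trace = 1 := by
  simp only [Matrix.trace, Matrix.diag, Matrix.of_apply]
  rw [← hv]
  exact Finset.sum_congr rfl fun j _ => mul_comm _ _

/-- For a GU ensemble generated by an irreducible unitary representation of a finite
group `G` of order `n` on `ℂ^d`, the optimal success probability is `(d/n) λ_max(ρ)`. -/
theorem optSucc_GU_irreducible
    {G : Type*} [Group G] [Fintype G] (d : ℕ) (hd : 0 < d)
    (π : G →* Matrix.unitaryGroup (Fin d) ℂ)
    (hirr : ∀ Y : Matrix (Fin d) (Fin d) ℂ,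
      (∀ g : G, (π g : Matrix (Fin d) (Fin d) ℂ) * Y = Y * (π g : Matrix (Fin d) (Fin d) ℂ)) →
      ∃ c : ℂ, Y = c • (1 : Matrix (Fin d) (Fin d) ℂ))
    (ρ : Matrix (Fin d) (Fin d) ℂ) (hρ : ρ.PosSemidef) (hρtr : ρ.trace = 1) :
    optSucc (fun _ : G => 1 / (Fintype.card G : ℝ))
        (fun g => (π g : Matrix (Fin d) (Fin d) ℂ) * ρ * star (π g : Matrix (Fin d) (Fin d) ℂ))
      = ((d : ℝ) / (Fintype.card G : ℝ)) * ⨆ i, hρ.1.eigenvalues i := by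
  classical
  set n := Fintype.card G with hn
  have hn0 : 0 < n := Fintype.card_pos
  set u : G → Matrix (Fin d) (Fin d) ℂ := fun g => (π g : Matrix (Fin d) (Fin d) ℂ) with hu
  have hu_star_mul : ∀ g, star (u g) * u g = 1 := fun g => Unitary.coe_star_mul_self (π g)
  have hu_mul_star : ∀ g, u g * star (u g) = 1 := fun g => Unitary.coe_mul_star_self (π g)
  have hu_mul : ∀ a b, u (a * b) = u a * u b := fun a b => by simp [hu, map_mul]
  set L : ℝ := ⨆ i, hρ.1.eigenvalues i with hLdef
  have : Nonempty (Fin d) := ⟨⟨0, hd⟩⟩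
  obtain ⟨i0, hi0⟩ := exists_eq_ciSup_of_finite (f := hρ.1.eigenvalues)
  have hL : ∀ i, hρ.1.eigenvalues i ≤ L :=
    fun i => le_ciSup (Set.finite_range _).bddAbove i
  have hi0' : hρ.1.eigenvalues i0 = L := hi0
  have hL0 : 0 ≤ L := hi0' ▸ hρ.eigenvalues_nonneg i0
  set v : Fin d → ℂ := ⇑(hρ.1.eigenvectorBasis i0) with hv_def
  have hnorm : ‖hρ.1.eigenvectorBasis i0‖ = 1 := hρ.1.eigenvectorBasis.orthonormal.1 i0
  have hinner : (inner ℂ (hρ.1.eigenvectorBasis i0) (hρ.1.eigenvectorBasis i0) : ℂ) = 1 := by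
    rw [inner_self_eq_norm_sq_to_K, hnorm]; norm_num
  have hv : ∑ j, star (v j) * v j = 1 := by
    rw [PiLp.inner_apply] at hinner
    simp only [RCLike.inner_apply, starRingEnd_apply] at hinner
    rw [← hinner]; exact Finset.sum_congr rfl fun j _ => mul_comm _ _
  have hv' : ∑ j, v j * star (v j) = 1 := by
    rw [← hv]; exact Finset.sum_congr rfl fun j _ => mul_comm _ _
  set P : Matrix (Fin d) (Fin d) ℂ := Matrix.of fun i j => v i * star (v j) with hPdef
  have hPpsd : P.PosSemidef := outer_psd v
  have hPtr : P.trace = 1 := outer_trace hv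
  have htrPρ : (P * ρ).trace = (L : ℂ) := by
    rw [Matrix.trace_mul_comm, hPdef, trace_mul_outer ρ v,
      (show Matrix.mulVec ρ v = hρ.1.eigenvalues i0 • v from hρ.1.mulVec_eigenvectorBasis i0)]
    have : ∀ j, (hρ.1.eigenvalues i0 • v) j * star (v j)
        = (hρ.1.eigenvalues i0 : ℂ) * (v j * star (v j)) := fun j => by
      rw [Pi.smul_apply, Complex.real_smul, mul_assoc]
    rw [Finset.sum_congr rfl fun j _ => this j, ← Finset.mul_sum, hv', mul_one, hi0']
  have hd0 : (d : ℂ) ≠ 0 := Nat.cast_ne_zero.mpr hd.ne'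
  have hn0C : (n : ℂ) ≠ 0 := Nat.cast_ne_zero.mpr hn0.ne'
  set S : Matrix (Fin d) (Fin d) ℂ := ∑ g, u g * P * star (u g) with hSdef
  have hinv : ∀ h : G, u h * S * star (u h) = S := by
    intro h
    rw [hSdef, Finset.mul_sum, Finset.sum_mul]
    exact Fintype.sum_equiv (Equiv.mulLeft h) _ _ fun g => by
      simp only [Equiv.coe_mulLeft, hu_mul, Matrix.star_mul, Matrix.mul_assoc]
  have hScomm : ∀ h : G, u h * S = S * u h := by
    intro h
    conv_lhs => rw [← Matrix.mul_one (u h * S), ← hu_star_mul h, ← Matrix.mul_assoc, hinv h]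
  obtain ⟨c, hc⟩ := hirr S hScomm
  have htrS : S.trace = (n : ℂ) := by
    rw [hSdef, Matrix.trace_sum]
    have : ∀ g : G, (u g * P * star (u g)).trace = 1 := fun g => by
      rw [Matrix.trace_mul_cycle, hu_star_mul g, Matrix.one_mul, hPtr]
    rw [Finset.sum_congr rfl fun g _ => this g]
    simp [hn]
  have hcval : c = (n : ℂ) / (d : ℂ) := by
    have h1 : S.trace = c * (d : ℂ) := by
      rw [hc, Matrix.trace_smul, Matrix.trace_one, smul_eq_mul]
      norm_num
    rw [htrS] at h1
    field_simp [h1]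
    exact h1.symm
  set M : G → Matrix (Fin d) (Fin d) ℂ :=
    fun g => ((d / (n : ℝ) : ℝ) : ℂ) • (u g * P * star (u g)) with hMdef
  have hMpsd : ∀ g, (M g).PosSemidef := fun g => by
    refine psd_smul_real ?_ (by positivity)
    have := hPpsd.mul_mul_conjTranspose_same (u g)
    rwa [← Matrix.star_eq_conjTranspose] at this
  have hMsum : ∑ g, M g = 1 := by
    rw [hMdef, ← Finset.smul_sum, ← hSdef, hc, smul_smul, hcval]
    have hone : ((d / (n : ℝ) : ℝ) : ℂ) * ((n : ℂ) / (d : ℂ)) = 1 := by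
      push_cast
      field_simp
    rw [hone, one_smul]
  have hconj : ∀ g, u g * P * star (u g) * (u g * ρ * star (u g)) = u g * (P * ρ) * star (u g) := by
    intro g
    simp only [Matrix.mul_assoc]
    rw [← Matrix.mul_assoc (star (u g)) (u g), hu_star_mul g, Matrix.one_mul]
  have htrM : ∀ g, (M g * (u g * ρ * star (u g))).trace = ((d / (n : ℝ) * L : ℝ) : ℂ) := by
    intro g
    simp only [hMdef]
    rw [Matrix.smul_mul, Matrix.trace_smul, hconj g, Matrix.trace_mul_cycle,
      hu_star_mul g, Matrix.one_mul, htrPρ, smul_eq_mul]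
    push_cast
    ring
  have hub : ∀ Q : G → Matrix (Fin d) (Fin d) ℂ, (∀ g, (Q g).PosSemidef) → (∑ g, Q g) = 1 →
      ∑ g, (1 / (n : ℝ)) * ((Q g * (u g * ρ * star (u g))).trace).re ≤ (d : ℝ) / n * L := by
    intro Q hQ hQsum
    have hterm : ∀ g, ((Q g * (u g * ρ * star (u g))).trace).re ≤ L * ((Q g).trace).re := by
      intro g
      have hKpsd : ((L : ℂ) • 1 - u g * ρ * star (u g)).PosSemidef := by
        have h0 : ((L : ℂ) • 1 - ρ).PosSemidef := smul_one_sub_psd hρ hL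
        have h2 := h0.mul_mul_conjTranspose_same (u g)
        have h3 : u g * ((L : ℂ) • 1 - ρ) * Matrix.conjTranspose (u g) = (L : ℂ) • 1 - u g * ρ * star (u g) := by
          rw [← Matrix.star_eq_conjTranspose, Matrix.mul_sub, Matrix.sub_mul, Matrix.mul_smul,
            Matrix.mul_one, Matrix.smul_mul, hu_mul_star g]
        rwa [h3] at h2
      have h4 := trace_mul_psd_nonneg (hQ g) hKpsd
      have h5 : (Q g * ((L : ℂ) • 1 - u g * ρ * star (u g))).trace
          = (L : ℂ) * (Q g).trace - (Q g * (u g * ρ * star (u g))).trace := by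
        rw [Matrix.mul_sub, Matrix.trace_sub, Matrix.mul_smul, Matrix.mul_one, Matrix.trace_smul, smul_eq_mul]
      rw [h5] at h4
      have h6 := (Complex.le_def.mp h4).1
      simp only [Complex.zero_re, Complex.sub_re] at h6
      have h7 : ((L : ℂ) * (Q g).trace).re = L * ((Q g).trace).re := by
        simp [Complex.mul_re]
      linarith
    have hsumtr : ∑ g, ((Q g).trace).re = (d : ℝ) := by
      have h8 : ∑ g, (Q g).trace = (d : ℂ) := by
        rw [← Matrix.trace_sum, hQsum, Matrix.trace_one]
        simp
      calc ∑ g, ((Q g).trace).re = (∑ g, (Q g).trace).re := by rw [Complex.re_sum]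
        _ = (d : ℝ) := by rw [h8]; simp
    have step : ∑ g, (1 / (n : ℝ)) * ((Q g * (u g * ρ * star (u g))).trace).re
        ≤ ∑ g, (1 / (n : ℝ)) * (L * ((Q g).trace).re) :=
      Finset.sum_le_sum fun g _ => mul_le_mul_of_nonneg_left (hterm g) (by positivity)
    refine step.trans ?_
    have heq : ∑ g, (1 / (n : ℝ)) * (L * ((Q g).trace).re)
        = (1 / (n : ℝ)) * L * ∑ g, ((Q g).trace).re := by
      rw [Finset.mul_sum]
      exact Finset.sum_congr rfl fun g _ => by ring
    rw [heq, hsumtr]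
    apply le_of_eq
    field_simp
  unfold optSucc
  apply IsGreatest.csSup_eq
  constructor
  · refine ⟨M, hMpsd, hMsum, ?_⟩
    show ((d : ℝ) / (n : ℝ)) * L
        = ∑ g : G, (1 / (n : ℝ)) * ((M g * (u g * ρ * star (u g))).trace).re
    rw [Finset.sum_congr rfl fun g _ => by rw [htrM g, Complex.ofReal_re]]
    rw [Finset.sum_const, Finset.card_univ, ← hn, nsmul_eq_mul]
    have hnne : (n : ℝ) ≠ 0 := Nat.cast_ne_zero.mpr hn0.ne'
    field_simp
  · rintro x ⟨Q, hQ, hQsum, rfl⟩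
    show ∑ g : G, (1 / (n : ℝ)) * ((Q g * (u g * ρ * star (u g))).trace).re
        ≤ ((d : ℝ) / (n : ℝ)) * L
    exact hub Q hQ hQsum
end

section
/- Let G be a finite group of order n acting irreducibly on a d-dimensional Hilbert space and let ρ be a density operator with ρ_g = g ρ g†. For α ≥ 1 define the α-power-PGM M_g^{(α)} = (Σ_h (ρ_h/n)^α)^{-1/2} (ρ_g/n)^α (Σ_h (ρ_h/n)^α)^{-1/2}. Then its success probability equals p_succ(α) = (d/n)·tr(ρ^{α+1})/tr(ρ^α). -/
open scoped ComplexOrder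

/-- Real power of a Hermitian matrix via the functional calculus (applied to the
eigenvalues; `0 ^ α = 0` for `α ≠ 0`, so negative powers are taken on the support).
Junk value `0` for non-Hermitian matrices. -/
noncomputable def mpow {d : ℕ} (A : Matrix (Fin d) (Fin d) ℂ) (α : ℝ) :
    Matrix (Fin d) (Fin d) ℂ :=
  if h : A.IsHermitian then h.cfc (fun x => x ^ α) else 0

namespace PGMaux

variable {d : ℕ}

lemma mpow_eq {A : Matrix (Fin d) (Fin d) ℂ} (hA : A.IsHermitian) (α : ℝ) :
    mpow A α = cfc (fun x : ℝ => x ^ α) A := by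
  rw [mpow, dif_pos hA]
  exact (hA.cfc_eq _).symm

lemma isHermitian_of_isSelfAdjoint {A : Matrix (Fin d) (Fin d) ℂ}
    (h : IsSelfAdjoint A) : A.IsHermitian := h

/-- Conjugation by a unitary as a star algebra homomorphism. -/
noncomputable def conjSAH (U : Matrix (Fin d) (Fin d) ℂ)
    (hU : U ∈ Matrix.unitaryGroup (Fin d) ℂ) :
    Matrix (Fin d) (Fin d) ℂ →⋆ₐ[ℂ] Matrix (Fin d) (Fin d) ℂ where
  toFun X := U * X * star U
  map_one' := by
    show U * 1 * star U = 1
    rw [mul_one, Unitary.mul_star_self_of_mem hU]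
  map_mul' X Y := by
    have h : ∀ Z : Matrix (Fin d) (Fin d) ℂ, star U * (U * Z) = Z := fun Z => by
      rw [← mul_assoc, Unitary.star_mul_self_of_mem hU, one_mul]
    simp only [mul_assoc, h]
  map_zero' := by simp
  map_add' X Y := by simp [mul_add, add_mul]
  commutes' c := by
    simp only [Algebra.algebraMap_eq_smul_one, mul_smul_comm, smul_mul_assoc, mul_one,
      Unitary.mul_star_self_of_mem hU]
  map_star' X := by simp [star_mul, mul_assoc]

lemma mpow_conj {A U : Matrix (Fin d) (Fin d) ℂ} (hA : A.IsHermitian)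
    (hU : U ∈ Matrix.unitaryGroup (Fin d) ℂ) (α : ℝ) :
    mpow (U * A * star U) α = U * mpow A α * star U := by
  have hsa : IsSelfAdjoint A := hA.isSelfAdjoint
  have hconj : IsSelfAdjoint (U * A * star U) := hsa.conjugate U
  rw [mpow_eq hA, mpow_eq (isHermitian_of_isSelfAdjoint hconj)]
  have hcont : Continuous fun X : Matrix (Fin d) (Fin d) ℂ => U * X * star U :=
    (continuous_const.matrix_mul continuous_id).matrix_mul continuous_const
  exact (StarAlgHom.map_cfc (conjSAH U hU) (fun x : ℝ => x ^ α) A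
    (Matrix.finite_real_spectrum.continuousOn _) hcont hsa hconj).symm

lemma coe_smul (r : ℝ) (X : Matrix (Fin d) (Fin d) ℂ) : (r : ℂ) • X = r • X := by
  rw [← algebraMap_smul ℂ r X, Complex.coe_algebraMap]

lemma spectrum_nonneg_of_posSemidef {A : Matrix (Fin d) (Fin d) ℂ}
    (hA : A.PosSemidef) : ∀ x ∈ spectrum ℝ A, (0:ℝ) ≤ x := by
  intro x hx
  rw [hA.isHermitian.spectrum_real_eq_range_eigenvalues] at hx
  obtain ⟨i, rfl⟩ := hx
  exact hA.eigenvalues_nonneg i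

lemma mpow_smul {A : Matrix (Fin d) (Fin d) ℂ} (hA : A.PosSemidef) {r : ℝ} (hr : 0 ≤ r)
    (α : ℝ) : mpow ((r : ℂ) • A) α = ((r ^ α : ℝ) : ℂ) • mpow A α := by
  have hA' : IsSelfAdjoint A := hA.isHermitian.isSelfAdjoint
  have hsm : (r : ℂ) • A = r • A := coe_smul r A
  have hrA : IsSelfAdjoint (r • A) := IsSelfAdjoint.smul (star_trivial r) hA'
  rw [hsm, mpow_eq (isHermitian_of_isSelfAdjoint hrA), mpow_eq hA.isHermitian, coe_smul]
  rw [← cfc_comp_const_mul r (fun x : ℝ => x ^ α) A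
    ((Matrix.finite_real_spectrum.image _).continuousOn _) hA']
  rw [← cfc_const_mul (r ^ α) (fun x : ℝ => x ^ α) A
    (Matrix.finite_real_spectrum.continuousOn _)]
  apply cfc_congr
  intro x hx
  exact Real.mul_rpow hr (spectrum_nonneg_of_posSemidef hA x hx)

lemma mpow_scalar (t β : ℝ) :
    mpow ((t : ℂ) • (1 : Matrix (Fin d) (Fin d) ℂ)) β
      = ((t ^ β : ℝ) : ℂ) • (1 : Matrix (Fin d) (Fin d) ℂ) := by
  have h1 : (t : ℂ) • (1 : Matrix (Fin d) (Fin d) ℂ) = algebraMap ℝ _ t := by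
    rw [Algebra.algebraMap_eq_smul_one, ← algebraMap_smul ℂ t (1 : Matrix (Fin d) (Fin d) ℂ),
      Complex.coe_algebraMap]
  have h2 : ((t ^ β : ℝ) : ℂ) • (1 : Matrix (Fin d) (Fin d) ℂ) = algebraMap ℝ _ (t ^ β) := by
    rw [Algebra.algebraMap_eq_smul_one,
      ← algebraMap_smul ℂ (t ^ β) (1 : Matrix (Fin d) (Fin d) ℂ), Complex.coe_algebraMap]
  have halg : IsSelfAdjoint (algebraMap ℝ (Matrix (Fin d) (Fin d) ℂ) t) :=
    IsSelfAdjoint.algebraMap _ (star_trivial t)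
  rw [h1, h2, mpow_eq (isHermitian_of_isSelfAdjoint halg), cfc_algebraMap]

lemma mul_mpow {A : Matrix (Fin d) (Fin d) ℂ} (hA : A.PosSemidef) {α : ℝ} (hα : 1 ≤ α) :
    A * mpow A α = mpow A (α + 1) := by
  have hA' : IsSelfAdjoint A := hA.isHermitian.isSelfAdjoint
  rw [mpow_eq hA.isHermitian, mpow_eq hA.isHermitian]
  nth_rewrite 1 [← cfc_id ℝ A hA']
  rw [← cfc_mul (id : ℝ → ℝ) (fun x : ℝ => x ^ α) A
    (Matrix.finite_real_spectrum.continuousOn _) (Matrix.finite_real_spectrum.continuousOn _)]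
  apply cfc_congr
  intro x hx
  have hx0 : (0:ℝ) ≤ x := spectrum_nonneg_of_posSemidef hA x hx
  have h1 : α + 1 ≠ 0 := by linarith
  simp only [id]
  rw [Real.rpow_add' hx0 h1, Real.rpow_one, mul_comm]

lemma trace_mpow {A : Matrix (Fin d) (Fin d) ℂ} (hA : A.IsHermitian) (α : ℝ) :
    (mpow A α).trace = ((∑ i, hA.eigenvalues i ^ α : ℝ) : ℂ) := by
  rw [mpow, dif_pos hA]
  unfold Matrix.IsHermitian.cfc
  rw [Unitary.conjStarAlgAut_apply, Matrix.trace_mul_cycle, Unitary.star_mul_self_of_mem (SetLike.coe_mem _), one_mul,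
    Matrix.trace_diagonal]
  push_cast
  rfl

end PGMaux

open PGMaux in
/-- For a GU ensemble generated by an irreducible representation, the success probability of
the `α`-power pretty good measurement equals `(d/n) · tr(ρ^{α+1}) / tr(ρ^α)`. -/
theorem power_PGM_success_GU_irreducible
    {G : Type*} [Group G] [Fintype G] (d : ℕ) (hd : 0 < d)
    (π : G →* Matrix.unitaryGroup (Fin d) ℂ)
    (hirr : ∀ Y : Matrix (Fin d) (Fin d) ℂ,
      (∀ g : G, (π g : Matrix (Fin d) (Fin d) ℂ) * Y = Y * (π g : Matrix (Fin d) (Fin d) ℂ)) →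
      ∃ c : ℂ, Y = c • (1 : Matrix (Fin d) (Fin d) ℂ))
    (ρ : Matrix (Fin d) (Fin d) ℂ) (hρ : ρ.PosSemidef) (hρtr : ρ.trace = 1)
    (α : ℝ) (hα : 1 ≤ α)
    (ρg : G → Matrix (Fin d) (Fin d) ℂ)
    (hρg : ∀ g, ρg g = (π g : Matrix (Fin d) (Fin d) ℂ) * ρ *
        star (π g : Matrix (Fin d) (Fin d) ℂ))
    (T : Matrix (Fin d) (Fin d) ℂ)
    (hT : T = ∑ h : G, mpow ((1 / (Fintype.card G : ℂ)) • ρg h) α)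
    (M : G → Matrix (Fin d) (Fin d) ℂ)
    (hM : ∀ g, M g = mpow T (-(1/2)) * mpow ((1 / (Fintype.card G : ℂ)) • ρg g) α *
        mpow T (-(1/2))) :
    (1 / (Fintype.card G : ℝ)) * ∑ g : G, ((ρg g * M g).trace).re
      = ((d : ℝ) / (Fintype.card G : ℝ)) *
          ((mpow ρ (α + 1)).trace.re / (mpow ρ α).trace.re) := by
  classical
  set n := Fintype.card G with hn
  have hn0 : 0 < n := Fintype.card_pos
  have hnR : (0:ℝ) < n := by exact_mod_cast hn0
  have hdR : (0:ℝ) < d := by exact_mod_cast hd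
  have hρH : ρ.IsHermitian := hρ.isHermitian
  set lam := hρH.eigenvalues with hlam
  set τα : ℝ := ∑ i, lam i ^ α with hτα
  set τα1 : ℝ := ∑ i, lam i ^ (α + 1) with hτα1
  have htr_mpow : ∀ β : ℝ, (mpow ρ β).trace = ((∑ i, lam i ^ β : ℝ) : ℂ) :=
    fun β => trace_mpow hρH β
  have hsum1 : ∑ i, lam i = 1 := by
    have h1 : (mpow ρ 1).trace = ((∑ i, lam i ^ (1:ℝ) : ℝ) : ℂ) := htr_mpow 1
    have h2 : mpow ρ 1 = ρ := by
      rw [mpow_eq hρH]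
      calc cfc (fun x : ℝ => x ^ (1:ℝ)) ρ = cfc (id : ℝ → ℝ) ρ := by
            apply cfc_congr; intro x _; simp [Real.rpow_one]
        _ = ρ := cfc_id ℝ ρ hρH.isSelfAdjoint
    rw [h2, hρtr] at h1
    have h3 : (∑ i, lam i ^ (1:ℝ) : ℝ) = 1 := by exact_mod_cast h1.symm
    simpa [Real.rpow_one] using h3
  have hlam0 : ∀ i, 0 ≤ lam i := hρ.eigenvalues_nonneg
  have hταpos : 0 < τα := by
    obtain ⟨i, hi⟩ : ∃ i, lam i ≠ 0 := by
      by_contra h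
      push_neg at h
      simp [h] at hsum1
    have hipos : 0 < lam i := lt_of_le_of_ne (hlam0 i) (Ne.symm hi)
    calc (0:ℝ) < lam i ^ α := Real.rpow_pos_of_pos hipos α
      _ ≤ τα := Finset.single_le_sum
          (fun j _ => Real.rpow_nonneg (hlam0 j) α) (Finset.mem_univ i)
  have hρgPSD : ∀ g : G, ((π g : Matrix (Fin d) (Fin d) ℂ) * ρ *
      star (π g : Matrix (Fin d) (Fin d) ℂ)).PosSemidef := by
    intro g
    rw [Matrix.star_eq_conjTranspose]
    exact hρ.mul_mul_conjTranspose_same _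
  set Pα := mpow ρ α with hPα
  set s : ℝ := (1 / n : ℝ) ^ α with hs
  have hspos : 0 < s := Real.rpow_pos_of_pos (by positivity) α
  have hmp : ∀ g : G, mpow ((1 / (n : ℂ)) • ρg g) α
      = ((s : ℝ) : ℂ) • ((π g : Matrix (Fin d) (Fin d) ℂ) * Pα *
          star (π g : Matrix (Fin d) (Fin d) ℂ)) := by
    intro g
    have hcoe : (1 / (n : ℂ)) = (((1 / n : ℝ)) : ℂ) := by push_cast; ring
    rw [hcoe, hρg g, mpow_smul (hρgPSD g) (by positivity) α,
      mpow_conj hρH (SetLike.coe_mem (π g)) α]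
  set Y : Matrix (Fin d) (Fin d) ℂ :=
    ∑ h : G, (π h : Matrix (Fin d) (Fin d) ℂ) * Pα *
      star (π h : Matrix (Fin d) (Fin d) ℂ) with hY
  have hstar1 : ∀ g : G, star (π g : Matrix (Fin d) (Fin d) ℂ) *
      (π g : Matrix (Fin d) (Fin d) ℂ) = 1 :=
    fun g => Unitary.star_mul_self_of_mem (SetLike.coe_mem _)
  have hcomm : ∀ g : G, (π g : Matrix (Fin d) (Fin d) ℂ) * Y
      = Y * (π g : Matrix (Fin d) (Fin d) ℂ) := by
    intro g
    rw [hY, Finset.mul_sum, Finset.sum_mul]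
    rw [← Equiv.sum_comp (Equiv.mulLeft g)
      (fun h => ((π h : Matrix (Fin d) (Fin d) ℂ) * Pα *
        star (π h : Matrix (Fin d) (Fin d) ℂ)) * (π g : Matrix (Fin d) (Fin d) ℂ))]
    apply Finset.sum_congr rfl
    intro h _
    have hmul : (π (g * h) : Matrix (Fin d) (Fin d) ℂ)
        = (π g : Matrix (Fin d) (Fin d) ℂ) * (π h : Matrix (Fin d) (Fin d) ℂ) := by
      rw [map_mul]; rfl
    have h2 : ∀ Z : Matrix (Fin d) (Fin d) ℂ,
        star (π g : Matrix (Fin d) (Fin d) ℂ) * ((π g : Matrix (Fin d) (Fin d) ℂ) * Z) = Z :=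
      fun Z => by rw [← mul_assoc, hstar1 g, one_mul]
    simp only [Equiv.coe_mulLeft, hmul, star_mul, mul_assoc, hstar1 g, mul_one]
  obtain ⟨c, hc⟩ := hirr Y hcomm
  have htrPα : Pα.trace = ((τα : ℝ) : ℂ) := htr_mpow α
  have htrY : Y.trace = (n : ℂ) * ((τα : ℝ) : ℂ) := by
    rw [hY, Matrix.trace_sum]
    rw [Finset.sum_congr rfl (fun h _ => by
      rw [Matrix.trace_mul_cycle, hstar1 h, one_mul, htrPα])]
    rw [Finset.sum_const, Finset.card_univ, nsmul_eq_mul]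
  have hdC : (d : ℂ) ≠ 0 := by exact_mod_cast hdR.ne'
  have hcval : c = (((n * τα / d : ℝ)) : ℂ) := by
    have h4 := congrArg Matrix.trace hc
    rw [htrY, Matrix.trace_smul, Matrix.trace_one, smul_eq_mul] at h4
    have h5 : (n : ℂ) * ((τα : ℝ) : ℂ) = c * (d : ℂ) := by
      simpa using h4
    push_cast
    rw [eq_div_iff hdC]
    linear_combination -h5
  set t : ℝ := s * (n * τα / d) with ht
  have htpos : 0 < t := by positivity
  have hscal : ((s : ℝ) : ℂ) * (((n * τα / d : ℝ)) : ℂ) = ((t : ℝ) : ℂ) := by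
    rw [ht]; push_cast; ring
  have hTval : T = ((t : ℝ) : ℂ) • (1 : Matrix (Fin d) (Fin d) ℂ) := by
    rw [hT, Finset.sum_congr rfl (fun h _ => hmp h), ← Finset.smul_sum, ← hY, hc, hcval,
      smul_smul, hscal]
  have hT12 : mpow T (-(1/2)) = ((t ^ (-(1/2):ℝ) : ℝ) : ℂ) • (1 : Matrix (Fin d) (Fin d) ℂ) := by
    rw [hTval]; exact mpow_scalar t _
  set u : ℝ := t ^ (-(1/2):ℝ) with hu
  have hupos : 0 < u := Real.rpow_pos_of_pos htpos _
  have hMg : ∀ g : G, M g = ((u * s * u : ℝ) : ℂ) •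
      ((π g : Matrix (Fin d) (Fin d) ℂ) * Pα * star (π g : Matrix (Fin d) (Fin d) ℂ)) := by
    intro g
    rw [hM g, hT12, hmp g]
    simp only [smul_mul_assoc, one_mul, mul_smul_comm, mul_one, smul_smul]
    congr 1
    push_cast
    ring
  have hterm : ∀ g : G, ((ρg g * M g).trace) = ((u * s * u * τα1 : ℝ) : ℂ) := by
    intro g
    rw [hMg g, hρg g, mul_smul_comm]
    have h2 : ∀ Z : Matrix (Fin d) (Fin d) ℂ,
        star (π g : Matrix (Fin d) (Fin d) ℂ) * ((π g : Matrix (Fin d) (Fin d) ℂ) * Z) = Z :=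
      fun Z => by rw [← mul_assoc, hstar1 g, one_mul]
    have hinner : ((π g : Matrix (Fin d) (Fin d) ℂ) * ρ * star (π g : Matrix (Fin d) (Fin d) ℂ)) *
        ((π g : Matrix (Fin d) (Fin d) ℂ) * Pα * star (π g : Matrix (Fin d) (Fin d) ℂ))
        = (π g : Matrix (Fin d) (Fin d) ℂ) * (ρ * Pα) *
            star (π g : Matrix (Fin d) (Fin d) ℂ) := by
      simp only [mul_assoc, h2]
    rw [hinner, Matrix.trace_smul, Matrix.trace_mul_cycle, hstar1 g, one_mul, hPα,
      mul_mpow hρ hα, htr_mpow (α + 1), ← hτα1, smul_eq_mul]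
    push_cast
    ring
  have hsum : ∑ g : G, ((ρg g * M g).trace).re = n * (u * s * u * τα1) := by
    rw [Finset.sum_congr rfl (fun g _ => by rw [hterm g, Complex.ofReal_re])]
    rw [Finset.sum_const, Finset.card_univ, nsmul_eq_mul]
  rw [hsum, htr_mpow (α + 1), htr_mpow α, Complex.ofReal_re, Complex.ofReal_re, ← hτα, ← hτα1]
  have huu : u * u = t⁻¹ := by
    rw [hu, ← Real.rpow_add htpos, show -(1/2) + -(1/2) = (-1 : ℝ) by norm_num,
      Real.rpow_neg_one]
  have hne : (n:ℝ) ≠ 0 := ne_of_gt hnR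
  have key : u * s * u * τα1 = (d : ℝ) * τα1 / (n * τα) := by
    rw [show u * s * u * τα1 = s * τα1 * (u * u) by ring, huu, ht]
    field_simp
  rw [key]
  field_simp
end

section
/- Let G be a finite group of order n acting irreducibly on a d-dimensional Hilbert space, and let ρ be a density operator with maximal-eigenvalue eigenprojector Π_ρ^max of rank d_max. Then the α-power-PGM measurement operators converge as α → ∞ to M_g = (d/(n·d_max))·g Π_ρ^max g†, and this limiting POVM achieves the optimal success probability (d/n)λ_max(ρ). -/
open scoped ComplexOrder

section Helpers

variable {d : ℕ}

lemma continuousOn_of_finite' {s : Set ℝ} (hs : s.Finite) (f : ℝ → ℝ) :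
    ContinuousOn f s := by
  have := hs.to_subtype
  rw [continuousOn_iff_continuous_restrict]
  exact continuous_of_discreteTopology

lemma contOn_spec (f : ℝ → ℝ) (A : Matrix (Fin d) (Fin d) ℂ) :
    ContinuousOn f (spectrum ℝ A) :=
  continuousOn_of_finite' A.finite_real_spectrum f

/-- Conjugation by a unitary as a star algebra homomorphism. -/
noncomputable def conjHom (W : Matrix (Fin d) (Fin d) ℂ)
    (hW : W ∈ Matrix.unitaryGroup (Fin d) ℂ) :
    Matrix (Fin d) (Fin d) ℂ →⋆ₐ[ℝ] Matrix (Fin d) (Fin d) ℂ where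
  toFun X := W * X * star W
  map_one' := by
    show W * 1 * star W = 1
    rw [mul_one, Matrix.mem_unitaryGroup_iff.mp hW]
  map_mul' X Y := by
    show W * (X * Y) * star W = (W * X * star W) * (W * Y * star W)
    have h1 : star W * W = 1 := Matrix.mem_unitaryGroup_iff'.mp hW
    have h2 : (W * X * star W) * (W * Y * star W) = W * X * (star W * W) * (Y * star W) := by
      simp only [mul_assoc]
    rw [h2, h1, mul_one]
    simp only [mul_assoc]
  map_zero' := by
    show W * 0 * star W = 0
    simp
  map_add' X Y := by
    show W * (X + Y) * star W = W * X * star W + W * Y * star W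
    simp [mul_add, add_mul]
  commutes' r := by
    show W * (algebraMap ℝ _ r) * star W = algebraMap ℝ _ r
    simp only [Algebra.algebraMap_eq_smul_one]
    rw [mul_smul_comm, mul_one, smul_mul_assoc, Matrix.mem_unitaryGroup_iff.mp hW]
  map_star' X := by
    show W * star X * star W = star (W * X * star W)
    simp only [StarMul.star_mul, star_star, mul_assoc]

lemma conjHom_continuous (W : Matrix (Fin d) (Fin d) ℂ)
    (hW : W ∈ Matrix.unitaryGroup (Fin d) ℂ) : Continuous (conjHom W hW) := by
  show Continuous fun X => W * X * star W
  exact (continuous_const.mul continuous_id).mul continuous_const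

lemma isHermitian_conj {W A : Matrix (Fin d) (Fin d) ℂ} (hA : A.IsHermitian) :
    (W * A * star W).IsHermitian := by
  have : star (W * A * star W) = W * A * star W := by
    simp only [StarMul.star_mul, star_star, ← mul_assoc]
    rw [show star A = A from hA]
  exact this

lemma cfc_conj {W A : Matrix (Fin d) (Fin d) ℂ}
    (hW : W ∈ Matrix.unitaryGroup (Fin d) ℂ) (hA : A.IsHermitian) (f : ℝ → ℝ) :
    cfc f (W * A * star W) = W * cfc f A * star W :=
  (StarAlgHomClass.map_cfc (S := ℝ) (conjHom W hW) f A (contOn_spec f A)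
    (conjHom_continuous W hW) hA (isHermitian_conj hA)).symm

lemma mpow_eq_cfc {A : Matrix (Fin d) (Fin d) ℂ} (hA : A.IsHermitian) (α : ℝ) :
    mpow A α = cfc (fun x : ℝ => x ^ α) A := by
  rw [mpow, dif_pos hA]; exact (hA.cfc_eq _).symm

lemma cfc_herm {A : Matrix (Fin d) (Fin d) ℂ} (hA : A.IsHermitian) (f : ℝ → ℝ) :
    cfc f A = (hA.eigenvectorUnitary : Matrix (Fin d) (Fin d) ℂ) *
      Matrix.diagonal (fun i => (f (hA.eigenvalues i) : ℂ)) *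
      star (hA.eigenvectorUnitary : Matrix (Fin d) (Fin d) ℂ) := by
  rw [hA.cfc_eq]; rfl

lemma cfc_real_smul_one (r : ℝ) (f : ℝ → ℝ) :
    cfc f ((r : ℂ) • (1 : Matrix (Fin d) (Fin d) ℂ)) = ((f r : ℝ) : ℂ) • 1 := by
  have h1 : ((r : ℂ) • (1 : Matrix (Fin d) (Fin d) ℂ)) = algebraMap ℝ _ r := by
    rw [Complex.coe_smul, Algebra.algebraMap_eq_smul_one]
  rw [h1, cfc_algebraMap, Algebra.algebraMap_eq_smul_one, Complex.coe_smul]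

lemma isHermitian_real_smul {A : Matrix (Fin d) (Fin d) ℂ} (hA : A.IsHermitian) (r : ℝ) :
    (((r : ℂ)) • A).IsHermitian := by
  have h : ((r : ℂ) • A).conjTranspose = (r : ℂ) • A := by
    rw [Matrix.conjTranspose_smul, Complex.star_def, Complex.conj_ofReal, hA.eq]
  exact h

lemma conj_conj (W₁ W₂ X : Matrix (Fin d) (Fin d) ℂ) :
    W₁ * (W₂ * X * star W₂) * star W₁ = (W₁ * W₂) * X * star (W₁ * W₂) := by
  simp only [StarMul.star_mul, mul_assoc]

lemma smul_conj (c : ℂ) (A B C : Matrix (Fin d) (Fin d) ℂ) :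
    c • (A * B * C) = A * (c • B) * C := by
  rw [Matrix.mul_smul, Matrix.smul_mul]

/-- Main scalar limit. -/
lemma tendsto_ratio {k : ℕ} (ev : Fin k → ℝ) (hev : ∀ i, 0 ≤ ev i) (lm : ℝ)
    (hlm : 0 < lm) (hle : ∀ i, ev i ≤ lm) (hex : ∃ i, ev i = lm) (i : Fin k)
    (nr dr : ℝ) (hnr : 0 < nr) (hdr : 0 < dr) :
    Filter.Tendsto (fun α : ℝ => ((nr * ∑ j, (ev j / nr) ^ α) / dr)⁻¹ * (ev i / nr) ^ α)
      Filter.atTop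
      (nhds (if ev i = lm then dr / (nr * ∑ j, (if ev j = lm then (1:ℝ) else 0)) else 0)) := by
  obtain ⟨i₀, hi₀⟩ := hex
  set x : Fin k → ℝ := fun j => ev j / lm with hx
  have hx0 : ∀ j, 0 ≤ x j := fun j => div_nonneg (hev j) hlm.le
  have hxev : ∀ (j : Fin k) (α : ℝ), (ev j / nr) ^ α = (lm / nr) ^ α * (x j) ^ α := by
    intro j α
    rw [← Real.mul_rpow (by positivity) (hx0 j)]
    congr 1
    rw [hx]
    field_simp [hlm.ne', hnr.ne']
  have hsum_pos : ∀ α : ℝ, 0 < ∑ j, (x j) ^ α := by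
    intro α
    refine Finset.sum_pos' (fun j _ => Real.rpow_nonneg (hx0 j) α) ⟨i₀, Finset.mem_univ _, ?_⟩
    have : x i₀ = 1 := by rw [hx]; simp [hi₀, div_self hlm.ne']
    rw [this, Real.one_rpow]; norm_num
  have heq : ∀ α : ℝ, ((nr * ∑ j, (ev j / nr) ^ α) / dr)⁻¹ * (ev i / nr) ^ α
      = dr * (x i) ^ α / (nr * ∑ j, (x j) ^ α) := by
    intro α
    have hc : 0 < (lm / nr) ^ α := Real.rpow_pos_of_pos (by positivity) α
    have h1 : (∑ j, (ev j / nr) ^ α) = (lm/nr)^α * ∑ j, (x j) ^ α := by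
      rw [Finset.mul_sum]; exact Finset.sum_congr rfl fun j _ => hxev j α
    rw [h1, hxev i α]
    have hs := hsum_pos α
    field_simp
  simp only [heq]
  have hxlim : ∀ j, Filter.Tendsto (fun α : ℝ => (x j) ^ α) Filter.atTop
      (nhds (if ev j = lm then (1:ℝ) else 0)) := by
    intro j
    by_cases h : ev j = lm
    · have hx1 : x j = 1 := by rw [hx]; simp [h, div_self hlm.ne']
      simp only [h, if_pos, hx1, Real.one_rpow]
      exact tendsto_const_nhds
    · have hlt : x j < 1 := (div_lt_one hlm).mpr (lt_of_le_of_ne (hle j) h)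
      simp only [h, if_neg, if_false]
      exact tendsto_rpow_atTop_of_base_lt_one _ (by linarith [hx0 j]) hlt
  have hm_pos : 0 < ∑ j, (if ev j = lm then (1:ℝ) else 0) := by
    refine Finset.sum_pos' (fun j _ => by positivity) ⟨i₀, Finset.mem_univ _, by simp [hi₀]⟩
  have hnum : Filter.Tendsto (fun α : ℝ => dr * (x i) ^ α) Filter.atTop
      (nhds (dr * (if ev i = lm then (1:ℝ) else 0))) := tendsto_const_nhds.mul (hxlim i)
  have hden : Filter.Tendsto (fun α : ℝ => nr * ∑ j, (x j) ^ α) Filter.atTop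
      (nhds (nr * ∑ j, (if ev j = lm then (1:ℝ) else 0))) :=
    tendsto_const_nhds.mul (tendsto_finset_sum _ fun j _ => hxlim j)
  have := hnum.div hden (by positivity)
  convert this using 2
  all_goals by_cases h : ev i = lm <;> simp [h]

end Helpers

/-- In the irreducible GU setting, the `α`-power-PGM operators converge as `α → ∞` to
`(d/(n·d_max)) · g Π_ρ^max g†`, and this limiting family is a POVM achieving the optimal
success probability `(d/n) λ_max(ρ)`. -/
theorem power_PGM_limit_GU_irreducible
    {G : Type*} [Group G] [Fintype G] (d : ℕ) (hd : 0 < d)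
    (π : G →* Matrix.unitaryGroup (Fin d) ℂ)
    (hirr : ∀ Y : Matrix (Fin d) (Fin d) ℂ,
      (∀ g : G, (π g : Matrix (Fin d) (Fin d) ℂ) * Y = Y * (π g : Matrix (Fin d) (Fin d) ℂ)) →
      ∃ c : ℂ, Y = c • (1 : Matrix (Fin d) (Fin d) ℂ))
    (ρ : Matrix (Fin d) (Fin d) ℂ) (hρ : ρ.PosSemidef) (hρtr : ρ.trace = 1)
    (ρg : G → Matrix (Fin d) (Fin d) ℂ)
    (hρg : ∀ g, ρg g = (π g : Matrix (Fin d) (Fin d) ℂ) * ρ *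
        star (π g : Matrix (Fin d) (Fin d) ℂ))
    (Pmax : Matrix (Fin d) (Fin d) ℂ)
    (hPmax : Pmax = hρ.1.cfc (fun x => if x = (⨆ i, hρ.1.eigenvalues i) then 1 else 0))
    (M : ℝ → G → Matrix (Fin d) (Fin d) ℂ)
    (hM : ∀ (α : ℝ) (g : G), M α g
      = mpow (∑ h : G, mpow ((1 / (Fintype.card G : ℂ)) • ρg h) α) (-(1/2)) *
          mpow ((1 / (Fintype.card G : ℂ)) • ρg g) α *
        mpow (∑ h : G, mpow ((1 / (Fintype.card G : ℂ)) • ρg h) α) (-(1/2)))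
    (Mlim : G → Matrix (Fin d) (Fin d) ℂ)
    (hMlim : ∀ g, Mlim g = ((d : ℂ) / ((Fintype.card G : ℂ) * (Pmax.rank : ℂ))) •
        ((π g : Matrix (Fin d) (Fin d) ℂ) * Pmax * star (π g : Matrix (Fin d) (Fin d) ℂ))) :
    (∀ g : G, Filter.Tendsto (fun α : ℝ => M α g) Filter.atTop (nhds (Mlim g))) ∧
    (∀ g : G, (Mlim g).PosSemidef) ∧ (∑ g : G, Mlim g) = 1 ∧
    (1 / (Fintype.card G : ℝ)) * ∑ g : G, ((Mlim g * ρg g).trace).re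
      = ((d : ℝ) / (Fintype.card G : ℝ)) * ⨆ i, hρ.1.eigenvalues i := by
  classical
  haveI : Nonempty (Fin d) := Fin.pos_iff_nonempty.mp hd
  have hn0 : 0 < Fintype.card G := Fintype.card_pos
  set nG : ℕ := Fintype.card G with hnGdef
  have hnR : (0:ℝ) < (nG:ℝ) := by exact_mod_cast hn0
  have hdR : (0:ℝ) < (d:ℝ) := by exact_mod_cast hd
  have hdC : (d:ℂ) ≠ 0 := by exact_mod_cast hd.ne'
  set V : Matrix (Fin d) (Fin d) ℂ := (hρ.1.eigenvectorUnitary : Matrix (Fin d) (Fin d) ℂ) with hVdef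
  set ev : Fin d → ℝ := hρ.1.eigenvalues with hevdef
  set lm : ℝ := ⨆ i, ev i with hlmdef
  set U : G → Matrix (Fin d) (Fin d) ℂ := fun g => (π g : Matrix (Fin d) (Fin d) ℂ) with hUdef
  set Q : G → Matrix (Fin d) (Fin d) ℂ := fun g => U g * V with hQdef
  -- basic unitarity facts
  have hUmem : ∀ g, U g ∈ Matrix.unitaryGroup (Fin d) ℂ := fun g => (π g).2
  have hVmem : V ∈ Matrix.unitaryGroup (Fin d) ℂ := SetLike.coe_mem _
  have hQmem : ∀ g, Q g ∈ Matrix.unitaryGroup (Fin d) ℂ := fun g => mul_mem (hUmem g) hVmem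
  have hQ1 : ∀ g, star (Q g) * Q g = 1 := fun g => Matrix.mem_unitaryGroup_iff'.mp (hQmem g)
  have hU1 : ∀ g, star (U g) * U g = 1 := fun g => Matrix.mem_unitaryGroup_iff'.mp (hUmem g)
  have hUmul : ∀ g h : G, U (g * h) = U g * U h := by
    intro g h; simp only [hUdef, map_mul]; rfl
  -- spectral data
  have hev0 : ∀ i, 0 ≤ ev i := fun i => hρ.eigenvalues_nonneg i
  have hspec : ρ = V * Matrix.diagonal (fun i => ((ev i : ℝ) : ℂ)) * star V :=
    hρ.1.spectral_theorem
  have hρgform : ∀ g, ρg g = Q g * Matrix.diagonal (fun i => ((ev i : ℝ) : ℂ)) * star (Q g) := by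
    intro g
    rw [hρg g, hspec, conj_conj]
  have hρgpsd : ∀ g, (ρg g).PosSemidef := by
    intro g
    rw [hρgform g, Matrix.star_eq_conjTranspose]
    exact (Matrix.posSemidef_diagonal_iff.mpr
      (fun i => Complex.zero_le_real.mpr (hev0 i))).mul_mul_conjTranspose_same (Q g)
  -- sup facts
  have hbdd : BddAbove (Set.range ev) := Set.Finite.bddAbove (Set.finite_range ev)
  have hle : ∀ i, ev i ≤ lm := fun i => le_ciSup hbdd i
  have hex : ∃ i, ev i = lm := by
    obtain ⟨i₀, h⟩ := Finite.exists_max ev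
    exact ⟨i₀, le_antisymm (hle i₀) (ciSup_le h)⟩
  have hevsum : ∑ i, ev i = 1 := by
    have h1 : ρ.trace = ∑ i, ((ev i : ℝ) : ℂ) := by
      rw [hspec, Matrix.trace_mul_cycle, Matrix.mem_unitaryGroup_iff'.mp hVmem,
        one_mul, Matrix.trace_diagonal]
    rw [hρtr] at h1
    exact_mod_cast h1.symm
  have hlm0 : 0 < lm := by
    by_contra hcon
    push_neg at hcon
    have : ∀ i, ev i = 0 := fun i => le_antisymm (le_trans (hle i) hcon) (hev0 i)
    rw [Finset.sum_congr rfl (fun i _ => this i)] at hevsum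
    simp at hevsum
  -- trace of conjugated diagonals
  have htr : ∀ (g : G) (w : Fin d → ℂ),
      (Q g * Matrix.diagonal w * star (Q g)).trace = ∑ i, w i := by
    intro g w
    rw [Matrix.trace_mul_cycle, hQ1 g, one_mul, Matrix.trace_diagonal]
  -- invariant sums are scalars
  have hscalar : ∀ w : Fin d → ℂ,
      (∑ g : G, Q g * Matrix.diagonal w * star (Q g)) = (((nG:ℂ) * ∑ i, w i) / (d:ℂ)) • 1 := by
    intro w
    set Z := ∑ g : G, Q g * Matrix.diagonal w * star (Q g) with hZ
    have hconj : ∀ h : G, U h * Z * star (U h) = Z := by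
      intro h
      rw [hZ, Finset.mul_sum, Finset.sum_mul]
      have hpt : ∀ g : G, U h * (Q g * Matrix.diagonal w * star (Q g)) * star (U h)
          = Q (h * g) * Matrix.diagonal w * star (Q (h * g)) := by
        intro g
        rw [conj_conj]
        have hq : Q (h * g) = U h * Q g := by rw [hQdef]; simp only [hUmul, mul_assoc]
        rw [hq]
      calc ∑ g : G, U h * (Q g * Matrix.diagonal w * star (Q g)) * star (U h)
          = ∑ g : G, Q (h * g) * Matrix.diagonal w * star (Q (h * g)) :=
            Finset.sum_congr rfl fun g _ => hpt g
        _ = ∑ g : G, Q g * Matrix.diagonal w * star (Q g) :=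
            Fintype.sum_equiv (Equiv.mulLeft h) _ _ fun g => by simp
    have hcomm : ∀ h : G, (π h : Matrix (Fin d) (Fin d) ℂ) * Z
        = Z * (π h : Matrix (Fin d) (Fin d) ℂ) := by
      intro h
      have h1 := hconj h
      calc U h * Z = U h * Z * (star (U h) * U h) := by rw [hU1 h, mul_one]
        _ = (U h * Z * star (U h)) * U h := by simp only [mul_assoc]
        _ = Z * U h := by rw [h1]
    obtain ⟨c, hc⟩ := hirr Z hcomm
    have htrZ : Z.trace = (nG:ℂ) * ∑ i, w i := by
      rw [hZ, Matrix.trace_sum]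
      rw [Finset.sum_congr rfl (fun g _ => htr g w), Finset.sum_const, Finset.card_univ,
        nsmul_eq_mul]
    have htrc : Z.trace = c * d := by
      rw [hc, Matrix.trace_smul, Matrix.trace_one]
      simp [smul_eq_mul]
    have hcval : c = ((nG:ℂ) * ∑ i, w i) / (d:ℂ) := by
      rw [eq_div_iff hdC, ← htrZ, htrc]
    rw [hc, hcval]
  -- hermitian-ness of the scaled states
  have hherm : ∀ g, ((1 / (nG:ℂ)) • ρg g).IsHermitian := by
    intro g
    have h1 : (1 / (nG:ℂ)) = (((1 / (nG:ℝ) : ℝ)) : ℂ) := by push_cast; ring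
    rw [h1]
    exact isHermitian_real_smul (hρgpsd g).1 _
  -- master cfc formula for the scaled states
  have hcfcσ : ∀ (f : ℝ → ℝ) (g : G), cfc f ((1 / (nG:ℂ)) • ρg g)
      = Q g * Matrix.diagonal (fun i => ((f (ev i / nG) : ℝ) : ℂ)) * star (Q g) := by
    intro f g
    have h1 : (1 / (nG:ℂ)) • ρg g = (1 / (nG:ℝ)) • ρg g := by
      rw [← Complex.coe_smul]; norm_num
    have hcont : ContinuousOn f (((1 / (nG:ℝ)) * ·) '' (spectrum ℝ (ρg g))) :=
      continuousOn_of_finite' ((Matrix.finite_real_spectrum (A := ρg g)).image _) f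
    have h2 : cfc f ((1 / (nG:ℂ)) • ρg g) = cfc (fun x => f (1 / (nG:ℝ) * x)) (ρg g) := by
      rw [h1]
      exact (cfc_comp_const_mul (1 / (nG:ℝ)) f (ρg g) hcont (hρgpsd g).1).symm
    rw [h2, hρg g, cfc_conj (hUmem g) hρ.1, cfc_herm hρ.1, conj_conj, ← hVdef, ← hevdef]
    have h3 : (fun i => ((f (1 / (nG:ℝ) * ev i) : ℝ) : ℂ))
        = fun i => ((f (ev i / nG) : ℝ) : ℂ) := by
      funext i; rw [one_div_mul_eq_div]
    rw [h3]
  have hmpowσ : ∀ (α : ℝ) (g : G), mpow ((1 / (nG:ℂ)) • ρg g) α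
      = Q g * Matrix.diagonal (fun i => (((ev i / nG) ^ α : ℝ) : ℂ)) * star (Q g) := by
    intro α g
    rw [mpow_eq_cfc (hherm g), hcfcσ]
  -- the T matrix is a scalar
  set rfun : ℝ → ℝ := fun α => ((nG:ℝ) * ∑ i, (ev i / nG) ^ α) / d with hrfun
  have hr_pos : ∀ α, 0 < rfun α := by
    intro α
    obtain ⟨i₀, hi₀⟩ := hex
    have hs : 0 < ∑ i, (ev i / nG) ^ α := by
      refine Finset.sum_pos' (fun i _ => Real.rpow_nonneg (div_nonneg (hev0 i) hnR.le) α)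
        ⟨i₀, Finset.mem_univ _, Real.rpow_pos_of_pos (by rw [hi₀]; exact div_pos hlm0 hnR) α⟩
    have heq : rfun α = ((nG:ℝ) * ∑ i, (ev i / nG) ^ α) / d := rfl
    rw [heq]
    exact div_pos (mul_pos hnR hs) hdR
  have hT : ∀ α : ℝ, (∑ h : G, mpow ((1 / (nG:ℂ)) • ρg h) α)
      = ((rfun α : ℝ) : ℂ) • (1 : Matrix (Fin d) (Fin d) ℂ) := by
    intro α
    rw [Finset.sum_congr rfl (fun h _ => hmpowσ α h), hscalar]
    congr 1
    rw [hrfun]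
    push_cast
    ring
  have hmpowT : ∀ α : ℝ, mpow (∑ h : G, mpow ((1 / (nG:ℂ)) • ρg h) α) (-(1/2))
      = (((rfun α ^ (-(1/2) : ℝ) : ℝ)) : ℂ) • 1 := by
    intro α
    rw [hT α, mpow_eq_cfc (isHermitian_real_smul Matrix.isHermitian_one _), cfc_real_smul_one]
  -- explicit diagonal form of the PGM operators
  have hM' : ∀ (α : ℝ) (g : G), M α g
      = Q g * Matrix.diagonal
          (fun i => ((((rfun α)⁻¹ * (ev i / nG) ^ α : ℝ)) : ℂ)) * star (Q g) := by
    intro α g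
    rw [hM, hmpowT, hmpowσ]
    have h2 : ∀ X : Matrix (Fin d) (Fin d) ℂ,
        (((rfun α ^ (-(1/2):ℝ) : ℝ) : ℂ) • (1 : Matrix (Fin d) (Fin d) ℂ)) * X *
          (((rfun α ^ (-(1/2):ℝ) : ℝ) : ℂ) • 1)
        = ((((rfun α)⁻¹ : ℝ)) : ℂ) • X := by
      intro X
      rw [Matrix.smul_mul, one_mul, Matrix.mul_smul, mul_one, smul_smul]
      congr 1
      rw [← Complex.ofReal_mul, ← Real.rpow_add (hr_pos α)]
      norm_num
      rw [Real.rpow_neg_one]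
      push_cast
      ring
    rw [h2, smul_conj, ← Matrix.diagonal_smul]
    have h3 : ((((rfun α)⁻¹ : ℝ)) : ℂ) • (fun i => (((ev i / nG) ^ α : ℝ) : ℂ))
        = fun i => ((((rfun α)⁻¹ * (ev i / nG) ^ α : ℝ)) : ℂ) := by
      funext i
      rw [Pi.smul_apply, smul_eq_mul, ← Complex.ofReal_mul]
    rw [h3]
  -- Pmax facts
  set kp : Fin d → ℝ := fun i => if ev i = lm then 1 else 0 with hkp
  have hPform : Pmax = V * Matrix.diagonal (fun i => ((kp i : ℝ) : ℂ)) * star V := by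
    rw [hPmax]
    rfl
  have hdetV : IsUnit V.det := by
    apply IsUnit.of_mul_eq_one (star V).det
    rw [← Matrix.det_mul, Matrix.mem_unitaryGroup_iff.mp hVmem, Matrix.det_one]
  have hdetVs : IsUnit (star V).det := by
    apply IsUnit.of_mul_eq_one V.det
    rw [← Matrix.det_mul, Matrix.mem_unitaryGroup_iff'.mp hVmem, Matrix.det_one]
  have hrank : (Pmax.rank : ℝ) = ∑ i, kp i := by
    have h1 : Pmax.rank = (Matrix.diagonal (fun i => ((kp i : ℝ) : ℂ))).rank := by
      rw [hPform, Matrix.rank_mul_eq_left_of_isUnit_det (star V) _ hdetVs,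
        Matrix.rank_mul_eq_right_of_isUnit_det V _ hdetV]
    rw [h1, Matrix.rank_diagonal]
    have h2 : Fintype.card {i // ((kp i : ℝ) : ℂ) ≠ 0} = Fintype.card {i // ev i = lm} :=
      Fintype.card_congr (Equiv.subtypeEquivRight (fun i => by
        simp only [hkp]; split_ifs with h <;> simp [h]))
    rw [h2, Fintype.card_subtype]
    have h3 : ∑ i, kp i = ((Finset.univ.filter (fun i => ev i = lm)).card : ℝ) := by
      rw [← Finset.sum_boole]
    rw [h3]
  have hrankC : ((Pmax.rank : ℕ) : ℂ) = ((∑ j, kp j : ℝ) : ℂ) := by exact_mod_cast hrank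
  have hm_pos : 0 < ∑ i, kp i := by
    obtain ⟨i₀, hi₀⟩ := hex
    refine Finset.sum_pos' (fun i _ => by rw [hkp]; positivity)
      ⟨i₀, Finset.mem_univ _, by rw [hkp]; simp [hi₀]⟩
  set kr : Fin d → ℝ := fun i => if ev i = lm then (d:ℝ) / ((nG:ℝ) * ∑ j, kp j) else 0 with hkr
  have hMlimform : ∀ g, Mlim g
      = Q g * Matrix.diagonal (fun i => ((kr i : ℝ) : ℂ)) * star (Q g) := by
    intro g
    rw [hMlim g, hrankC, hPform, conj_conj, smul_conj, ← Matrix.diagonal_smul]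
    have h3 : ((d : ℂ) / ((nG:ℂ) * (((∑ j, kp j : ℝ)) : ℂ))) • (fun i => ((kp i : ℝ) : ℂ))
        = fun i => ((kr i : ℝ) : ℂ) := by
      funext i
      rw [Pi.smul_apply, smul_eq_mul]
      simp only [hkr, hkp]
      split_ifs with h
      · push_cast
        ring
      · simp
    rw [h3]
  refine ⟨?_, ?_, ?_, ?_⟩
  · -- convergence
    intro g
    have hqlim : ∀ i, Filter.Tendsto (fun α : ℝ => (rfun α)⁻¹ * (ev i / nG) ^ α)
        Filter.atTop (nhds (kr i)) := by
      intro i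
      have := tendsto_ratio ev hev0 lm hlm0 hle hex i (nG:ℝ) (d:ℝ) hnR hdR
      convert this using 2
    have hv : Filter.Tendsto (fun α : ℝ => (fun i => (rfun α)⁻¹ * (ev i / nG) ^ α))
        Filter.atTop (nhds kr) := tendsto_pi_nhds.mpr hqlim
    have hdiagc : Continuous fun (v : Fin d → ℝ) =>
        Q g * Matrix.diagonal (fun i => ((v i : ℝ) : ℂ)) * star (Q g) := by
      refine (continuous_const.mul ?_).mul continuous_const
      exact Continuous.matrix_diagonal
        (continuous_pi fun i => Complex.continuous_ofReal.comp (continuous_apply i))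
    have hcomp := (hdiagc.tendsto kr).comp hv
    have he1 : (fun α : ℝ => M α g) = fun α : ℝ =>
        Q g * Matrix.diagonal (fun i => (((rfun α)⁻¹ * (ev i / nG) ^ α : ℝ) : ℂ)) * star (Q g) :=
      funext fun α => hM' α g
    rw [he1, hMlimform g]
    exact hcomp
  · -- positivity
    intro g
    rw [hMlimform g, Matrix.star_eq_conjTranspose]
    refine (Matrix.posSemidef_diagonal_iff.mpr fun i => Complex.zero_le_real.mpr ?_)
      |>.mul_mul_conjTranspose_same (Q g)
    rw [hkr]
    by_cases h : ev i = lm <;> simp [h] <;> positivity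
  · -- sums to one
    rw [Finset.sum_congr rfl (fun g _ => hMlimform g), hscalar]
    have h1 : ((nG:ℂ) * ∑ i, ((kr i : ℝ) : ℂ)) / (d:ℂ) = 1 := by
      have h2 : ∑ i, kr i = (d:ℝ) / ((nG:ℝ) * ∑ j, kp j) * ∑ j, kp j := by
        rw [Finset.mul_sum Finset.univ kp ((d:ℝ) / ((nG:ℝ) * ∑ j, kp j))]
        refine Finset.sum_congr rfl fun i _ => ?_
        rw [hkr, hkp]
        by_cases h : ev i = lm <;> simp [h]
      have h3 : ∑ i, ((kr i : ℝ) : ℂ) = ((∑ i, kr i : ℝ) : ℂ) := by push_cast; rfl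
      have h4 : (d:ℝ) / ((nG:ℝ) * ∑ j, kp j) * ∑ j, kp j = (d:ℝ) / (nG:ℝ) := by
        rw [div_mul_eq_mul_div, mul_comm ((nG:ℝ)) (∑ j, kp j), ← div_div,
          mul_div_assoc, div_self hm_pos.ne', mul_one]
      rw [h3, h2, h4, div_eq_one_iff_eq hdC]
      have hnC : (nG:ℂ) ≠ 0 := by exact_mod_cast hn0.ne'
      push_cast
      field_simp
    rw [h1, one_smul]
  · -- optimality
    have hprod : ∀ g, Mlim g * ρg g
        = Q g * Matrix.diagonal (fun i => ((kr i * ev i : ℝ) : ℂ)) * star (Q g) := by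
      intro g
      rw [hMlimform g, hρgform g]
      have h5 : (Q g * Matrix.diagonal (fun i => ((kr i : ℝ) : ℂ)) * star (Q g)) *
          (Q g * Matrix.diagonal (fun i => ((ev i : ℝ) : ℂ)) * star (Q g))
          = Q g * (Matrix.diagonal (fun i => ((kr i : ℝ) : ℂ)) * (star (Q g) * Q g) *
              Matrix.diagonal (fun i => ((ev i : ℝ) : ℂ))) * star (Q g) := by
        simp only [mul_assoc]
      rw [h5, hQ1 g, mul_one, Matrix.diagonal_mul_diagonal]
      have h6 : (fun i => ((kr i : ℝ) : ℂ) * ((ev i : ℝ) : ℂ))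
          = fun i => ((kr i * ev i : ℝ) : ℂ) := by
        funext i; rw [← Complex.ofReal_mul]
      rw [h6]
    have htrace : ∀ g : G, ((Mlim g * ρg g).trace).re = ∑ i, kr i * ev i := by
      intro g
      rw [hprod g, htr g]
      have h7 : ∑ i, ((kr i * ev i : ℝ) : ℂ) = ((∑ i, kr i * ev i : ℝ) : ℂ) := by
        push_cast; rfl
      rw [h7, Complex.ofReal_re]
    rw [Finset.sum_congr rfl (fun g _ => htrace g), Finset.sum_const, Finset.card_univ,
      nsmul_eq_mul]
    have h8 : ∑ i, kr i * ev i = (d:ℝ) / (nG:ℝ) * lm := by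
      have h9 : ∀ i, kr i * ev i
          = (if ev i = lm then (d:ℝ) / ((nG:ℝ) * ∑ j, kp j) * lm else 0) := by
        intro i
        simp only [hkr]
        split_ifs with h
        · rw [h]
        · rw [zero_mul]
      rw [Finset.sum_congr rfl (fun i _ => h9 i)]
      have h10 : ∑ i, (if ev i = lm then (d:ℝ) / ((nG:ℝ) * ∑ j, kp j) * lm else 0)
          = ((d:ℝ) / ((nG:ℝ) * ∑ j, kp j) * lm) * ∑ j, kp j := by
        rw [Finset.mul_sum Finset.univ kp ((d:ℝ) / ((nG:ℝ) * ∑ j, kp j) * lm)]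
        refine Finset.sum_congr rfl fun i _ => ?_
        simp only [hkp]
        split_ifs with h <;> simp
      rw [h10]
      field_simp [hm_pos.ne', hnR.ne']
    rw [h8]
    field_simp
    rfl
end

section
/- Let (1/n, ψ_g = g|ψ⟩⟨ψ|g†)_{g∈G} be a pure-state GU ensemble generated by a unitary representation of a finite group G of order n, with average state ρ̄ = (1/n)Σ_g ψ_g. Then the success probability of the pretty good measurement equals (1/n)·[tr(ρ̄^{1/2})]². -/
open scoped ComplexOrder

section auxlemmas
open Matrix Polynomial

lemma rpow_half_helper : ∀ x : ℝ, x ^ (-(1/2) : ℝ) * x = x ^ ((1/2) : ℝ) := by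
  intro x
  rcases lt_trichotomy x 0 with hx | rfl | hx
  · rw [Real.rpow_def_of_neg hx, Real.rpow_def_of_neg hx]
    have h2 : (-2⁻¹ : ℝ) * Real.pi = -(Real.pi/2) := by ring
    have h3 : (2⁻¹ : ℝ) * Real.pi = Real.pi/2 := by ring
    rw [one_div] at *
    rw [h2, Real.cos_neg, Real.cos_pi_div_two]
    rw [h3, Real.cos_pi_div_two]
    ring
  · simp [Real.zero_rpow]
  · nth_rewrite 2 [(Real.rpow_one x).symm]
    rw [← Real.rpow_add hx]
    norm_num


noncomputable def conjAlgHom {d : ℕ} (U : Matrix (Fin d) (Fin d) ℂ)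
    (h1 : U * star U = 1) (h2 : star U * U = 1) :
    Matrix (Fin d) (Fin d) ℂ →ₐ[ℂ] Matrix (Fin d) (Fin d) ℂ where
  toFun X := U * X * star U
  map_one' := by show U * 1 * star U = 1; rw [mul_one, h1]
  map_mul' X Y := by
    show U * (X * Y) * star U = (U * X * star U) * (U * Y * star U)
    simp only [mul_assoc]
    rw [← mul_assoc (star U) U, h2, one_mul]
  map_zero' := by show U * 0 * star U = 0; simp
  map_add' X Y := by
    show U * (X + Y) * star U = U * X * star U + U * Y * star U
    rw [mul_add, add_mul]
  commutes' r := by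
    show U * algebraMap ℂ _ r * star U = algebraMap ℂ _ r
    simp only [Algebra.algebraMap_eq_smul_one, smul_mul_assoc, mul_smul_comm, one_mul, mul_one, h1]

lemma cfc_eq_aeval {d : ℕ} {A : Matrix (Fin d) (Fin d) ℂ} (hA : A.IsHermitian) (f : ℝ → ℝ)
    (p : ℂ[X]) (hp : ∀ i, p.eval ((hA.eigenvalues i : ℝ) : ℂ) = ((f (hA.eigenvalues i) : ℝ) : ℂ)) :
    hA.cfc f = aeval A p := by
  set U := (hA.eigenvectorUnitary : Matrix (Fin d) (Fin d) ℂ) with hU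
  have h1 : U * star U = 1 := Unitary.mul_star_self_of_mem hA.eigenvectorUnitary.2
  have h2 : star U * U = 1 := Unitary.star_mul_self_of_mem hA.eigenvectorUnitary.2
  have hAeq : A = conjAlgHom U h1 h2 (diagonal (RCLike.ofReal ∘ hA.eigenvalues)) :=
    hA.spectral_theorem
  conv_rhs => rw [hAeq, aeval_algHom_apply]
  have hdiag : aeval (diagonal (RCLike.ofReal ∘ hA.eigenvalues) : Matrix (Fin d) (Fin d) ℂ) p
      = diagonal (fun i => p.eval ((hA.eigenvalues i : ℝ) : ℂ)) := by
    have := aeval_algHom_apply (diagonalAlgHom ℂ (n := Fin d) (α := ℂ))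
      (RCLike.ofReal ∘ hA.eigenvalues : Fin d → ℂ) p
    simp only [diagonalAlgHom_apply] at this
    rw [this]
    have h4 : (aeval (RCLike.ofReal ∘ hA.eigenvalues : Fin d → ℂ)) p
        = fun i => p.eval ((hA.eigenvalues i : ℝ) : ℂ) := by
      funext i
      have h5 := aeval_algHom_apply (Pi.evalAlgHom ℂ (fun _ : Fin d => ℂ) i)
        (RCLike.ofReal ∘ hA.eigenvalues : Fin d → ℂ) p
      simp only [Pi.evalAlgHom_apply, Function.comp_apply] at h5
      rw [← h5, aeval_def, eval₂_eq_eval_map]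
      simp
    rw [h4]
  rw [hdiag]
  have hfun : (fun i => p.eval ((hA.eigenvalues i : ℝ) : ℂ))
      = (RCLike.ofReal ∘ f ∘ hA.eigenvalues : Fin d → ℂ) := funext fun i => hp i
  rw [hfun]
  rfl

lemma commute_cfc {d : ℕ} {A B : Matrix (Fin d) (Fin d) ℂ} (hA : A.IsHermitian)
    (h : B * A = A * B) (f : ℝ → ℝ) : B * hA.cfc f = hA.cfc f * B := by
  classical
  set s : Finset ℂ := Finset.image (fun i => ((hA.eigenvalues i : ℝ) : ℂ)) Finset.univ with hs
  set p := Lagrange.interpolate s id (fun z => ((f z.re : ℝ) : ℂ)) with hpdef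
  have hp : ∀ i, p.eval ((hA.eigenvalues i : ℝ) : ℂ) = ((f (hA.eigenvalues i) : ℝ) : ℂ) := by
    intro i
    have hmem : ((hA.eigenvalues i : ℝ) : ℂ) ∈ s :=
      Finset.mem_image_of_mem _ (Finset.mem_univ i)
    have := Lagrange.eval_interpolate_at_node (v := id) (s := s)
      (fun z => ((f z.re : ℝ) : ℂ)) (Set.injOn_id _) hmem
    rw [hpdef]
    simpa using this
  rw [cfc_eq_aeval hA f p hp]
  induction p using Polynomial.induction_on with
  | C a => simp [Algebra.algebraMap_eq_smul_one, smul_mul_assoc, mul_smul_comm]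
  | add q r hq hr => simp [map_add, mul_add, add_mul, hq, hr]
  | monomial n a ih =>
      rw [pow_succ, ← mul_assoc, _root_.map_mul, aeval_X]
      calc B * ((aeval A) (C a * X ^ n) * A)
          = (B * (aeval A) (C a * X ^ n)) * A := by rw [mul_assoc]
        _ = ((aeval A) (C a * X ^ n) * B) * A := by rw [ih]
        _ = (aeval A) (C a * X ^ n) * (B * A) := by rw [mul_assoc]
        _ = (aeval A) (C a * X ^ n) * (A * B) := by rw [h]
        _ = (aeval A) (C a * X ^ n) * A * B := by rw [mul_assoc]


section aux
variable {d : ℕ}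

lemma mul_vecMulVec' (A : Matrix (Fin d) (Fin d) ℂ) (u w : Fin d → ℂ) :
    A * vecMulVec u w = vecMulVec (A *ᵥ u) w := by
  ext i j
  simp only [Matrix.mul_apply, vecMulVec_apply, mulVec, dotProduct, Finset.sum_mul]
  exact Finset.sum_congr rfl fun k _ => by ring

lemma vecMulVec_mul' (A : Matrix (Fin d) (Fin d) ℂ) (u w : Fin d → ℂ) :
    vecMulVec u w * A = vecMulVec u (w ᵥ* A) := by
  ext i j
  simp only [Matrix.mul_apply, vecMulVec_apply, vecMul, dotProduct, Finset.mul_sum]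
  exact Finset.sum_congr rfl fun k _ => by ring

lemma vecMulVec_mul_vecMulVec (a b u w : Fin d → ℂ) :
    vecMulVec a b * vecMulVec u w = (b ⬝ᵥ u) • vecMulVec a w := by
  ext i j
  simp only [Matrix.mul_apply, vecMulVec_apply, Matrix.smul_apply, dotProduct, smul_eq_mul,
    Finset.sum_mul, Finset.mul_sum]
  exact Finset.sum_congr rfl fun k _ => by ring

lemma trace_vecMulVec (a w : Fin d → ℂ) : (vecMulVec a w).trace = a ⬝ᵥ w := by
  simp [Matrix.trace, Matrix.diag, vecMulVec_apply, dotProduct]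

lemma cfc_mul' {A : Matrix (Fin d) (Fin d) ℂ} (hA : A.IsHermitian) (f g : ℝ → ℝ) :
    hA.cfc f * hA.cfc g = hA.cfc (fun x => f x * g x) := by
  have h2 : star (hA.eigenvectorUnitary : Matrix (Fin d) (Fin d) ℂ) *
      (hA.eigenvectorUnitary : Matrix (Fin d) (Fin d) ℂ) = 1 :=
    Unitary.star_mul_self_of_mem hA.eigenvectorUnitary.2
  unfold Matrix.IsHermitian.cfc
  simp only [Unitary.conjStarAlgAut_apply]
  simp only [mul_assoc]
  rw [← mul_assoc (star _) _ (diagonal _ * _), h2, one_mul, ← mul_assoc (diagonal _),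
    diagonal_mul_diagonal]
  have hfun : (fun i => (RCLike.ofReal ∘ f ∘ hA.eigenvalues) i *
        (RCLike.ofReal ∘ g ∘ hA.eigenvalues) i : Fin d → ℂ)
      = (RCLike.ofReal ∘ (fun x => f x * g x) ∘ hA.eigenvalues) := by
    funext i; simp
  rw [hfun]

lemma cfcIdAux {A : Matrix (Fin d) (Fin d) ℂ} (hA : A.IsHermitian) :
    hA.cfc (fun x => x) = A := (hA.spectral_theorem).symm

lemma cfc_isHermitian {A : Matrix (Fin d) (Fin d) ℂ} (hA : A.IsHermitian) (f : ℝ → ℝ) :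
    (hA.cfc f).IsHermitian := by
  unfold Matrix.IsHermitian.cfc
  rw [Matrix.IsHermitian, Unitary.conjStarAlgAut_apply, conjTranspose_mul, conjTranspose_mul, diagonal_conjTranspose]
  rw [← star_eq_conjTranspose, ← star_eq_conjTranspose, star_star, mul_assoc]
  have hfun : (star (RCLike.ofReal ∘ f ∘ hA.eigenvalues) : Fin d → ℂ)
      = (RCLike.ofReal ∘ f ∘ hA.eigenvalues) := by
    funext i; simp [Pi.star_apply]
  rw [hfun]
end aux

end auxlemmas

open Matrix in
/-- For a pure-state GU ensemble `(1/n, g|ψ⟩⟨ψ|g†)_{g ∈ G}` with average state `ρ̄`,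
the success probability of the pretty good measurement equals `(1/n)·[tr(ρ̄^{1/2})]²`. -/
theorem pgm_success_pure_GU
    {G : Type*} [Group G] [Fintype G] (d : ℕ) (hd : 0 < d)
    (π : G →* Matrix.unitaryGroup (Fin d) ℂ)
    (ψ : Fin d → ℂ) (hψ : dotProduct (star ψ) ψ = 1)
    (ψg : G → Matrix (Fin d) (Fin d) ℂ)
    (hψg : ∀ g, ψg g = (π g : Matrix (Fin d) (Fin d) ℂ) *
        Matrix.vecMulVec ψ (star ψ) * star (π g : Matrix (Fin d) (Fin d) ℂ))
    (ρbar : Matrix (Fin d) (Fin d) ℂ)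
    (hρbar : ρbar = (1 / (Fintype.card G : ℂ)) • ∑ g : G, ψg g)
    (M : G → Matrix (Fin d) (Fin d) ℂ)
    (hM : ∀ g, M g = mpow ρbar (-(1/2)) * ((1 / (Fintype.card G : ℂ)) • ψg g) *
        mpow ρbar (-(1/2))) :
    ∑ g : G, (1 / (Fintype.card G : ℝ)) * ((M g * ψg g).trace).re
      = (1 / (Fintype.card G : ℝ)) * ((mpow ρbar (1/2)).trace.re) ^ 2 := by
  classical
  -- rank-one form
  have hψg' : ∀ g, ψg g = vecMulVec ((π g : Matrix (Fin d) (Fin d) ℂ) *ᵥ ψ)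
      (star ((π g : Matrix (Fin d) (Fin d) ℂ) *ᵥ ψ)) := by
    intro g
    rw [hψg g]
    ext i j
    simp only [Matrix.mul_apply, vecMulVec_apply, mulVec, dotProduct, star_apply,
      Pi.star_apply, RCLike.star_def, map_sum, _root_.map_mul, Finset.sum_mul, Finset.mul_sum]
    refine Finset.sum_congr rfl fun k _ => Finset.sum_congr rfl fun l _ => ?_
    ring
  -- hermitian of each state
  have hψgH : ∀ g, (ψg g).IsHermitian := by
    intro g
    rw [hψg' g]
    ext i j
    simp only [conjTranspose_apply, vecMulVec_apply, Pi.star_apply, star_mul', star_star]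
    ring
  -- hermitian of average state
  have hρH : ρbar.IsHermitian := by
    rw [hρbar, Matrix.IsHermitian, conjTranspose_smul, conjTranspose_sum]
    congr 1
    · simp
    · exact Finset.sum_congr rfl fun g _ => hψgH g
  -- covariance of average state
  have hcov : ∀ h : G, (π h : Matrix (Fin d) (Fin d) ℂ) * ρbar
      = ρbar * (π h : Matrix (Fin d) (Fin d) ℂ) := by
    intro h
    rw [hρbar, mul_smul_comm, smul_mul_assoc]
    congr 1
    rw [Finset.mul_sum, Finset.sum_mul]
    have key : ∀ g : G, (π h : Matrix (Fin d) (Fin d) ℂ) * ψg g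
        = ψg (h * g) * (π h : Matrix (Fin d) (Fin d) ℂ) := by
      intro g
      rw [hψg g, hψg (h * g)]
      have hmul : ((π (h * g) : Matrix (Fin d) (Fin d) ℂ))
          = (π h : Matrix (Fin d) (Fin d) ℂ) * (π g : Matrix (Fin d) (Fin d) ℂ) := by
        rw [_root_.map_mul]; rfl
      have hstar : star ((π h : Matrix (Fin d) (Fin d) ℂ)) * (π h : Matrix (Fin d) (Fin d) ℂ)
          = 1 := Unitary.star_mul_self_of_mem (π h).2
      rw [hmul, StarMul.star_mul]
      simp only [mul_assoc]
      rw [hstar, mul_one]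
    calc ∑ g : G, (π h : Matrix (Fin d) (Fin d) ℂ) * ψg g
        = ∑ g : G, ψg (h * g) * (π h : Matrix (Fin d) (Fin d) ℂ) :=
          Finset.sum_congr rfl fun g _ => key g
      _ = ∑ g : G, ψg g * (π h : Matrix (Fin d) (Fin d) ℂ) :=
          Fintype.sum_equiv (Equiv.mulLeft h) _ _ (fun g => rfl)
  -- the inverse square root
  set N := mpow ρbar (-(1/2)) with hNdef
  have hmpow : ∀ α : ℝ, mpow ρbar α = hρH.cfc (fun x => x ^ α) := fun α => dif_pos hρH
  have hNcomm : ∀ h : G, (π h : Matrix (Fin d) (Fin d) ℂ) * N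
      = N * (π h : Matrix (Fin d) (Fin d) ℂ) := by
    intro h
    rw [hNdef, hmpow]
    exact commute_cfc hρH (hcov h) _
  have hNH : N.IsHermitian := by rw [hNdef, hmpow]; exact cfc_isHermitian hρH _
  set c : ℂ := star ψ ⬝ᵥ (N *ᵥ ψ) with hcdef
  have hunit : ∀ g : G, ∀ w : Fin d → ℂ,
      star ((π g : Matrix (Fin d) (Fin d) ℂ) *ᵥ ψ) ⬝ᵥ ((π g : Matrix (Fin d) (Fin d) ℂ) *ᵥ w)
        = star ψ ⬝ᵥ w := by
    intro g w
    rw [star_mulVec, Matrix.dotProduct_mulVec, vecMul_vecMul, ← star_eq_conjTranspose,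
      Unitary.star_mul_self_of_mem (π g).2, vecMul_one]
  have hvc : ∀ g : G, star ((π g : Matrix (Fin d) (Fin d) ℂ) *ᵥ ψ)
      ⬝ᵥ (N *ᵥ ((π g : Matrix (Fin d) (Fin d) ℂ) *ᵥ ψ)) = c := by
    intro g
    rw [Matrix.mulVec_mulVec, ← hNcomm g, ← Matrix.mulVec_mulVec, hunit g]
  have hcstar : (starRingEnd ℂ) c = c := by
    have h1 : star c = star (N *ᵥ ψ) ⬝ᵥ star (star ψ) := (star_dotProduct_star _ _).symm
    rw [star_star, star_mulVec, show Nᴴ = N from hNH, ← Matrix.dotProduct_mulVec] at h1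
    exact h1
  obtain ⟨r, hr⟩ : ∃ r : ℝ, c = (r : ℂ) := Complex.conj_eq_iff_real.mp hcstar
  have hn0 : (Fintype.card G : ℝ) ≠ 0 := Nat.cast_ne_zero.mpr Fintype.card_ne_zero
  have hn0' : (Fintype.card G : ℂ) ≠ 0 := Nat.cast_ne_zero.mpr Fintype.card_ne_zero
  -- trace of N * ψg g
  have htrN : ∀ g : G, (N * ψg g).trace = c := by
    intro g
    rw [hψg' g, mul_vecMulVec', _root_.trace_vecMulVec, dotProduct_comm, hvc g]
  -- per-summand trace
  have htr : ∀ g : G, (M g * ψg g).trace = (1 / (Fintype.card G : ℂ)) * c ^ 2 := by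
    intro g
    rw [hM g, mul_smul_comm, smul_mul_assoc, smul_mul_assoc, trace_smul]
    congr 1
    rw [hψg' g, mul_vecMulVec' N, vecMulVec_mul', _root_.vecMulVec_mul_vecMulVec, trace_smul,
      _root_.trace_vecMulVec, ← Matrix.dotProduct_mulVec, hvc g, dotProduct_comm, hvc g]
    rw [smul_eq_mul, sq]
  -- trace of the square root
  have hsqrt : (mpow ρbar (1/2)).trace = c := by
    have hNρ : mpow ρbar (1/2) = N * ρbar := by
      calc mpow ρbar (1/2)
          = hρH.cfc (fun x => x ^ ((1/2 : ℝ))) := hmpow _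
        _ = hρH.cfc (fun x => x ^ (-(1/2) : ℝ) * x) :=
            congrArg _ (funext fun x => (rpow_half_helper x).symm)
        _ = hρH.cfc (fun x => x ^ (-(1/2) : ℝ)) * hρH.cfc (fun x => x) :=
            (cfc_mul' hρH _ _).symm
        _ = N * ρbar := by rw [cfcIdAux hρH, hNdef, hmpow]
    rw [hNρ]
    conv_lhs => rw [hρbar]
    rw [mul_smul_comm, trace_smul, Finset.mul_sum, trace_sum]
    have : ∑ g : G, (N * ψg g).trace = (Fintype.card G : ℂ) * c := by
      rw [Finset.sum_congr rfl fun g _ => htrN g]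
      simp [Finset.sum_const, mul_comm]
    rw [this, smul_eq_mul]
    field_simp
  -- assemble
  have hlhs : ∀ g : G, (1 / (Fintype.card G : ℝ)) * ((M g * ψg g).trace).re
      = (1 / (Fintype.card G : ℝ)) * ((1 / (Fintype.card G : ℝ)) * r ^ 2) := by
    intro g
    rw [htr g, hr]
    congr 1
    have : (1 / (Fintype.card G : ℂ)) * (r : ℂ) ^ 2
        = (((1 / (Fintype.card G : ℝ)) * r ^ 2 : ℝ) : ℂ) := by
      push_cast
      ring
    rw [this, Complex.ofReal_re]
  rw [Finset.sum_congr rfl fun g _ => hlhs g, Finset.sum_const, Finset.card_univ,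
    hsqrt, hr, Complex.ofReal_re, nsmul_eq_mul]
  field_simp
end

section
/- Let ρ̄ be a density operator on a finite-dimensional Hilbert space and |ψ⟩ a unit vector in the support of ρ̄ with ⟨ψ|ρ̄^{-1/2}|ψ⟩ = tr(ρ̄^{1/2}). Then |ψ⟩⟨ψ| ≤ tr(ρ̄^{1/2})·ρ̄^{1/2}, i.e., tr(ρ̄^{1/2})·ρ̄^{1/2} − |ψ⟩⟨ψ| is positive semidefinite. -/
open scoped ComplexOrder

open Matrix Complex in
private lemma key_cs {d : ℕ} (e : Fin d → ℝ) (he : ∀ i, 0 ≤ e i)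
    (φ y : Fin d → ℂ) (hφ : ∀ i, e i = 0 → φ i = 0) :
    Complex.normSq (∑ i, (starRingEnd ℂ) (φ i) * y i)
      ≤ (∑ i, e i ^ (-(1/2) : ℝ) * Complex.normSq (φ i))
        * (∑ i, e i ^ ((1/2) : ℝ) * Complex.normSq (y i)) := by
  have hsq : ∀ (p : ℝ) (x : ℝ), 0 ≤ x → (x ^ p) ^ 2 = x ^ (p * 2) := by
    intro p x hx
    rw [Real.rpow_mul hx, Real.rpow_two]
  have h1 : ‖∑ i, (starRingEnd ℂ) (φ i) * y i‖
      ≤ ∑ i, (e i ^ (-(1/4):ℝ) * ‖φ i‖) * (e i ^ ((1/4):ℝ) * ‖y i‖) := by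
    refine (norm_sum_le _ _).trans (Finset.sum_le_sum fun i _ => ?_)
    rcases eq_or_lt_of_le (he i) with h0 | h0
    · simp [hφ i h0.symm]
    · have : e i ^ (-(1/4):ℝ) * ‖φ i‖ * (e i ^ ((1/4):ℝ) * ‖y i‖)
          = (e i ^ (-(1/4):ℝ) * e i ^ ((1/4):ℝ)) * (‖φ i‖ * ‖y i‖) := by
        ring
      rw [this, ← Real.rpow_add h0]
      norm_num
  calc Complex.normSq (∑ i, (starRingEnd ℂ) (φ i) * y i)
      = ‖∑ i, (starRingEnd ℂ) (φ i) * y i‖ ^ 2 := (Complex.sq_norm _).symm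
    _ ≤ (∑ i, (e i ^ (-(1/4):ℝ) * ‖φ i‖) * (e i ^ ((1/4):ℝ) * ‖y i‖)) ^ 2 := by
        exact pow_le_pow_left₀ (norm_nonneg _) h1 2
    _ ≤ (∑ i, (e i ^ (-(1/4):ℝ) * ‖φ i‖) ^ 2)
          * (∑ i, (e i ^ ((1/4):ℝ) * ‖y i‖) ^ 2) :=
        Finset.sum_mul_sq_le_sq_mul_sq _ _ _
    _ = (∑ i, e i ^ (-(1/2) : ℝ) * Complex.normSq (φ i))
        * (∑ i, e i ^ ((1/2) : ℝ) * Complex.normSq (y i)) := by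
        congr 1 <;> refine Finset.sum_congr rfl fun i _ => ?_ <;>
          rw [mul_pow, hsq _ _ (he i), Complex.sq_norm] <;> norm_num

open Matrix Complex

/-- If `ρ̄` is a density matrix and `|ψ⟩` is a unit vector in the support of `ρ̄` with
`⟨ψ|ρ̄^{-1/2}|ψ⟩ = tr(ρ̄^{1/2})`, then `|ψ⟩⟨ψ| ≤ tr(ρ̄^{1/2})·ρ̄^{1/2}`. -/
theorem outer_le_trace_sqrt_smul_sqrt
    (d : ℕ) (hd : 0 < d)
    (ρbar : Matrix (Fin d) (Fin d) ℂ) (hρbar : ρbar.PosSemidef) (htr : ρbar.trace = 1)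
    (ψ : Fin d → ℂ) (hψ : dotProduct (star ψ) ψ = 1)
    (hsupp : ∃ v : Fin d → ℂ, ρbar.mulVec v = ψ)
    (hover : dotProduct (star ψ) ((mpow ρbar (-(1/2))).mulVec ψ)
      = (mpow ρbar (1/2)).trace) :
    ((mpow ρbar (1/2)).trace • mpow ρbar (1/2) - Matrix.vecMulVec ψ (star ψ)).PosSemidef := by
  classical
  have hH := hρbar.1
  set e : Fin d → ℝ := hH.eigenvalues with he_def
  have he : ∀ i, 0 ≤ e i := hρbar.eigenvalues_nonneg
  set U : Matrix (Fin d) (Fin d) ℂ := (hH.eigenvectorUnitary : Matrix (Fin d) (Fin d) ℂ)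
    with hU_def
  have hUU : U * Uᴴ = 1 := by
    simpa [Matrix.star_eq_conjTranspose] using
      (Matrix.mem_unitaryGroup_iff.mp hH.eigenvectorUnitary.2)
  have hUU' : Uᴴ * U = 1 := by
    simpa [Matrix.star_eq_conjTranspose] using
      (Matrix.mem_unitaryGroup_iff'.mp hH.eigenvectorUnitary.2)
  have hmpow : ∀ α : ℝ, mpow ρbar α
      = U * Matrix.diagonal (fun i => ((e i ^ α : ℝ) : ℂ)) * Uᴴ := by
    intro α
    rw [mpow, dif_pos hH]
    rfl
  -- quadratic form of a real-diagonal conjugation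
  have hquad : ∀ (c : Fin d → ℝ) (x : Fin d → ℂ),
      dotProduct (star x) ((U * Matrix.diagonal (fun i => ((c i : ℝ) : ℂ)) * Uᴴ).mulVec x)
        = ∑ i, ((c i : ℂ)) * ((Complex.normSq ((Uᴴ.mulVec x) i) : ℝ) : ℂ) := by
    intro c x
    set y := Uᴴ.mulVec x with hy
    have hsy : Matrix.vecMul (star x) U = star y := by
      rw [hy, Matrix.star_mulVec, Matrix.conjTranspose_conjTranspose]
    rw [← Matrix.mulVec_mulVec, ← Matrix.mulVec_mulVec, Matrix.dotProduct_mulVec, hsy]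
    simp only [dotProduct, Matrix.mulVec_diagonal, Pi.star_apply]
    refine Finset.sum_congr rfl fun i _ => ?_
    simp only [Complex.normSq_eq_conj_mul_self, Complex.star_def]
    ring
  have htrace : (mpow ρbar (1/2)).trace = ((∑ i, e i ^ ((1/2):ℝ) : ℝ) : ℂ) := by
    rw [hmpow, Matrix.trace_mul_cycle, hUU', Matrix.one_mul, Matrix.trace_diagonal]
    push_cast
    rfl
  set t : ℝ := ∑ i, e i ^ ((1/2):ℝ) with ht_def
  set φ := Uᴴ.mulVec ψ with hφ_def
  have hφ0 : ∀ i, e i = 0 → φ i = 0 := by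
    obtain ⟨v, hv⟩ := hsupp
    have hρ : ρbar = U * Matrix.diagonal (fun i => ((e i : ℝ) : ℂ)) * Uᴴ := by
      conv_lhs => rw [hH.spectral_theorem]
      rfl
    intro i hei
    have : φ = (Matrix.diagonal (fun i => ((e i : ℝ) : ℂ))).mulVec (Uᴴ.mulVec v) := by
      rw [hφ_def, ← hv, hρ, ← Matrix.mulVec_mulVec, ← Matrix.mulVec_mulVec,
        Matrix.mulVec_mulVec, hUU', Matrix.one_mulVec]
    rw [this]
    simp [Matrix.mulVec_diagonal, hei]
  -- hover in real form
  have hover' : (∑ i, e i ^ (-(1/2):ℝ) * Complex.normSq (φ i)) = t := by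
    have h1 : dotProduct (star ψ) ((mpow ρbar (-(1/2))).mulVec ψ)
        = ((∑ i, e i ^ (-(1/2):ℝ) * Complex.normSq (φ i) : ℝ) : ℂ) := by
      rw [hmpow, hquad]
      push_cast
      rfl
    have := hover
    rw [h1, htrace] at this
    exact_mod_cast this
  refine Matrix.PosSemidef.of_dotProduct_mulVec_nonneg ?_ ?_
  · -- Hermitian
    have hSd : (Matrix.diagonal (fun i => ((e i ^ ((1/2):ℝ) : ℝ) : ℂ))).IsHermitian := by
      have hstar : (star fun i => ((e i ^ ((1/2):ℝ) : ℝ) : ℂ))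
          = fun i => ((e i ^ ((1/2):ℝ) : ℝ) : ℂ) := by
        funext i
        simp [Pi.star_apply, Complex.star_def, Complex.conj_ofReal]
      rw [Matrix.IsHermitian, Matrix.diagonal_conjTranspose, hstar]
    have hS : (mpow ρbar (1/2)).IsHermitian := by
      rw [hmpow]
      exact Matrix.isHermitian_mul_mul_conjTranspose _ hSd
    have houter : (Matrix.vecMulVec ψ (star ψ)).IsHermitian := by
      rw [Matrix.IsHermitian]
      ext i j
      simp [Matrix.conjTranspose_apply, Matrix.vecMulVec_apply, mul_comm]
    refine Matrix.IsHermitian.sub ?_ houter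
    rw [Matrix.IsHermitian, Matrix.conjTranspose_smul, hS.eq, htrace]
    congr 1
    simp [RCLike.star_def]
  · -- quadratic form nonneg
    intro x
    set y := Uᴴ.mulVec x with hy
    have hsx : dotProduct (star ψ) x = ∑ i, (starRingEnd ℂ) (φ i) * y i := by
      have : ∑ i, (starRingEnd ℂ) (φ i) * y i = dotProduct (star φ) y := by
        simp [dotProduct]
      rw [this, hφ_def, hy, Matrix.star_mulVec, Matrix.conjTranspose_conjTranspose,
        ← Matrix.dotProduct_mulVec, Matrix.mulVec_mulVec, hUU, Matrix.one_mulVec]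
    set s : ℂ := dotProduct (star ψ) x with hs
    have houterq : dotProduct (star x) ((Matrix.vecMulVec ψ (star ψ)).mulVec x)
        = ((Complex.normSq s : ℝ) : ℂ) := by
      have h2 : (Matrix.vecMulVec ψ (star ψ)).mulVec x = s • ψ := by
        ext i
        simp [Matrix.mulVec, Matrix.vecMulVec_apply, dotProduct, Finset.mul_sum,
          mul_comm, mul_assoc, mul_left_comm, hs]
      rw [h2, dotProduct_smul]
      have h3 : dotProduct (star x) ψ = (starRingEnd ℂ) s := by
        rw [hs]
        simp [dotProduct, map_sum, _root_.map_mul, mul_comm]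
      rw [h3, Complex.normSq_eq_conj_mul_self, smul_eq_mul]
      ring
    have hSq : dotProduct (star x) ((mpow ρbar (1/2)).mulVec x)
        = ((∑ i, e i ^ ((1/2):ℝ) * Complex.normSq (y i) : ℝ) : ℂ) := by
      rw [hmpow, hquad]
      push_cast
      rfl
    rw [Matrix.sub_mulVec, dotProduct_sub, Matrix.smul_mulVec,
      dotProduct_smul, houterq, hSq, htrace]
    set Q : ℝ := ∑ i, e i ^ ((1/2):ℝ) * Complex.normSq (y i) with hQ
    have hkey : Complex.normSq s ≤ t * Q := by
      rw [hsx, ← hover']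
      exact key_cs e he φ y hφ0
    have : (t : ℂ) • ((Q : ℝ) : ℂ) - ((Complex.normSq s : ℝ) : ℂ)
        = (((t * Q - Complex.normSq s : ℝ)) : ℂ) := by
      push_cast
      simp [smul_eq_mul]
    rw [this]
    rw [Complex.zero_le_real]
    linarith
end
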